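/- arXiv:2605.13505 — 6 statements merged into one kernel-verified Lean document; each statement's English description precedes it below -/
import Mathlib

section
/- Let U ⊆ ℝ^n be any open set, let E be a smooth vector field on U, and let L = E∘ be the pointwise multiplication operator. Assume that for all u ∈ U and all distinct α, β ∈ {1,…,r} one has E^{1(α)}(u) ≠ E^{1(β)}(u), and assume the Nijenhuis torsion of L vanishes on U (N_L = 0). Then each component of E depends only on the coordinates of its own block: for all distinct α, β ∈ {1,…,r}, all p ∈ {1,…,m_α} and all j ∈ {1,…,m_β}, the partial derivative ∂_{j(β)} E^{p(α)} vanishes identically on U. -/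
open scoped BigOperators

section Defs

variable {ι : Type*} [Fintype ι] [DecidableEq ι]

/-- Partial derivative of a scalar function in the `i`-th coordinate direction. -/
noncomputable def pd (i : ι) (f : (ι → ℝ) → ℝ) (u : ι → ℝ) : ℝ :=
  fderiv ℝ f u (Pi.single i 1)

/-- Lie bracket of two vector fields on `ι → ℝ`. -/
noncomputable def lieBr (X Y : (ι → ℝ) → (ι → ℝ)) (u : ι → ℝ) : ι → ℝ :=
  fun i => ∑ s, (X u s * pd s (fun v => Y v i) u - Y u s * pd s (fun v => X v i) u)

/-- Nijenhuis torsion of a pointwise operator `L` (applied pointwise to vector fields):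
`N_L(X,Y) = [LX,LY] − L[LX,Y] − L[X,LY] + L²[X,Y]`. -/
noncomputable def nij (L : (ι → ℝ) → (ι → ℝ) → (ι → ℝ))
    (X Y : (ι → ℝ) → (ι → ℝ)) (u : ι → ℝ) : ι → ℝ :=
  lieBr (fun v => L v (X v)) (fun v => L v (Y v)) u
  - L u (lieBr (fun v => L v (X v)) Y u)
  - L u (lieBr X (fun v => L v (Y v)) u)
  + L u (L u (lieBr X Y u))

end Defs

section Block

variable {r : ℕ}

/-- David–Hertling block product on `ℝ^n`, `n = m 0 + ⋯ + m (r-1)` (0-based indices: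
`(u∘v)_{i(α)} = Σ_{j+k=i} u_{j(α)} v_{k(α)}`). -/
noncomputable def blockProd (m : Fin r → ℕ)
    (u v : ((α : Fin r) × Fin (m α)) → ℝ) : ((α : Fin r) × Fin (m α)) → ℝ :=
  fun i => ∑ j : Fin (m i.1), ∑ k : Fin (m i.1),
    if (j : ℕ) + (k : ℕ) = (i.2 : ℕ) then u ⟨i.1, j⟩ * v ⟨i.1, k⟩ else 0

end Block

section AuxPD

variable {ι : Type*} [Fintype ι] [DecidableEq ι]

lemma pd_const (s : ι) (c : ℝ) (u : ι → ℝ) : pd s (fun _ => c) u = 0 := by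
  simp [pd]

lemma pd_ite (s : ι) (c : Prop) [Decidable c] (f g : (ι → ℝ) → ℝ) (u : ι → ℝ) :
    pd s (fun v => if c then f v else g v) u = if c then pd s f u else pd s g u := by
  by_cases h : c <;> simp [h]

end AuxPD

lemma blockProd_single {r : ℕ} (m : Fin r → ℕ) (w : ((α : Fin r) × Fin (m α)) → ℝ)
    (q i : (α : Fin r) × Fin (m α)) :
    blockProd m w (Pi.single q 1) i =
      if q.1 = i.1 ∧ (q.2 : ℕ) ≤ (i.2 : ℕ) then
        w ⟨i.1, ⟨(i.2 : ℕ) - (q.2 : ℕ), Nat.lt_of_le_of_lt (Nat.sub_le _ _) i.2.isLt⟩⟩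
      else 0 := by
  obtain ⟨qa, qb⟩ := q
  obtain ⟨ia, ib⟩ := i
  simp only [blockProd]
  by_cases hq : qa = ia
  · subst hq
    have hsingle : ∀ k : Fin (m qa),
        (Pi.single (⟨qa, qb⟩ : (α : Fin r) × Fin (m α)) 1 : ((α : Fin r) × Fin (m α)) → ℝ) ⟨qa, k⟩
        = if k = qb then 1 else 0 := by
      intro k
      rw [Pi.single_apply]
      simp [Sigma.mk.inj_iff]
    simp only [hsingle, mul_ite, mul_one, mul_zero]
    rw [Finset.sum_comm, Finset.sum_eq_single qb]
    · simp only [eq_self_iff_true, if_true, true_and]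
      by_cases hle : (qb : ℕ) ≤ (ib : ℕ)
      · rw [if_pos hle]
        rw [Finset.sum_eq_single
            (⟨(ib:ℕ) - (qb:ℕ), Nat.lt_of_le_of_lt (Nat.sub_le _ _) ib.isLt⟩ : Fin (m qa))]
        · rw [if_pos (show (ib:ℕ) - (qb:ℕ) + (qb:ℕ) = (ib:ℕ) by omega)]
        · intro b _ hb
          rw [if_neg]
          intro hc
          exact hb (Fin.ext (show (b:ℕ) = (ib:ℕ) - (qb:ℕ) by omega))
        · simp
      · rw [if_neg hle]
        apply Finset.sum_eq_zero
        intro j _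
        rw [if_neg]
        omega
    · intro b _ hb
      apply Finset.sum_eq_zero
      intro j _
      simp [hb]
    · simp
  · have hsingle : ∀ k : Fin (m ia),
        (Pi.single (⟨qa, qb⟩ : (α : Fin r) × Fin (m α)) 1 : ((α : Fin r) × Fin (m α)) → ℝ) ⟨ia, k⟩
        = 0 := by
      intro k
      rw [Pi.single_apply]
      rw [if_neg]
      intro h
      rw [Sigma.mk.inj_iff] at h
      exact hq h.1.symm
    simp [hsingle, hq]

/-- if the first components of `E` in distinct blocks never coincide on `U`
and the Nijenhuis torsion of `L = E∘` vanishes on `U`, then each component of `E` depends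
only on the coordinates of its own block. -/
theorem stmt0 {r : ℕ} (m : Fin r → ℕ) (hm : ∀ α, 0 < m α)
    (U : Set (((α : Fin r) × Fin (m α)) → ℝ)) (hU : IsOpen U)
    (E : (((α : Fin r) × Fin (m α)) → ℝ) → ((α : Fin r) × Fin (m α)) → ℝ)
    (hE : ContDiffOn ℝ (⊤ : ℕ∞) E U)
    (hdist : ∀ u ∈ U, ∀ α β : Fin r, α ≠ β →
      E u ⟨α, ⟨0, hm α⟩⟩ ≠ E u ⟨β, ⟨0, hm β⟩⟩)
    (hN : ∀ X Y : (((α : Fin r) × Fin (m α)) → ℝ) → ((α : Fin r) × Fin (m α)) → ℝ,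
      ContDiffOn ℝ (⊤ : ℕ∞) X U → ContDiffOn ℝ (⊤ : ℕ∞) Y U →
      ∀ u ∈ U, nij (fun v w => blockProd m (E v) w) X Y u = 0) :
    ∀ α β : Fin r, α ≠ β → ∀ p : Fin (m α), ∀ j : Fin (m β),
      ∀ u ∈ U, pd (⟨β, j⟩ : (α : Fin r) × Fin (m α)) (fun v => E v ⟨α, p⟩) u = 0 := by
  intro α β hab p j u hu
  have hba : ¬ (β = α) := fun h => hab h.symm
  -- Step 1: the key equation coming from the vanishing of the Nijenhuis torsion on
  -- constant basis vector fields.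
  have key : ∀ (p' : Fin (m α)) (j' : Fin (m β)),
      (∑ s : (γ : Fin r) × Fin (m γ),
        (if β = s.1 ∧ (j' : ℕ) ≤ (s.2 : ℕ) then
          E u ⟨s.1, ⟨(s.2 : ℕ) - (j' : ℕ), Nat.lt_of_le_of_lt (Nat.sub_le _ _) s.2.isLt⟩⟩
        else 0) * pd s (fun v => E v ⟨α, p'⟩) u)
      = ∑ a : Fin (m α), ∑ e : Fin (m α),
          (if (a : ℕ) + (e : ℕ) = (p' : ℕ) then
            E u ⟨α, a⟩ * pd (⟨β, j'⟩ : (γ : Fin r) × Fin (m γ)) (fun v => E v ⟨α, e⟩) u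
          else 0) := by
    intro p' j'
    have h0 := hN (fun _ => Pi.single (⟨β, j'⟩ : (γ : Fin r) × Fin (m γ)) (1:ℝ))
                 (fun _ => Pi.single (⟨α, ⟨0, hm α⟩⟩ : (γ : Fin r) × Fin (m γ)) (1:ℝ))
                 contDiffOn_const contDiffOn_const u hu
    have h1 := congrFun h0 ⟨α, p'⟩
    simp only [nij, lieBr, Pi.add_apply, Pi.sub_apply, Pi.zero_apply] at h1
    simp only [blockProd_single] at h1
    simp only [blockProd] at h1
    simp only [lieBr] at h1
    simp only [blockProd_single] at h1
    simp only [pd_ite, pd_const, hba, false_and, if_false, mul_zero, zero_mul, sub_zero, zero_sub,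
      neg_zero, Finset.sum_const_zero, Nat.sub_zero, Fin.eta, Nat.zero_le, true_and, and_true,
      eq_self_iff_true, if_true, add_zero] at h1
    simp only [Pi.single_apply, ite_mul, one_mul, zero_mul, Finset.sum_ite_eq', Finset.mem_univ,
      if_true, mul_ite, mul_one, mul_zero, Finset.sum_const_zero, sub_zero, add_zero] at h1
    simp only [ite_self, Finset.sum_const_zero, sub_zero, mul_zero, add_zero] at h1
    simp only [ite_mul, zero_mul]
    exact sub_eq_zero.mp h1
  -- Step 2: rewrite the sigma-type sum as a sum over the β-block.
  have key2 : ∀ (p' : Fin (m α)) (j' : Fin (m β)),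
      (∑ i : Fin (m β),
        if (j' : ℕ) ≤ (i : ℕ) then
          E u ⟨β, ⟨(i : ℕ) - (j' : ℕ), Nat.lt_of_le_of_lt (Nat.sub_le _ _) i.isLt⟩⟩ *
            pd (⟨β, i⟩ : (γ : Fin r) × Fin (m γ)) (fun v => E v ⟨α, p'⟩) u
        else 0)
      = ∑ a : Fin (m α), ∑ e : Fin (m α),
          (if (a : ℕ) + (e : ℕ) = (p' : ℕ) then
            E u ⟨α, a⟩ * pd (⟨β, j'⟩ : (γ : Fin r) × Fin (m γ)) (fun v => E v ⟨α, e⟩) u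
          else 0) := by
    intro p' j'
    rw [← key p' j']
    rw [← Finset.univ_sigma_univ, Finset.sum_sigma]
    rw [Finset.sum_eq_single β]
    · apply Finset.sum_congr rfl
      intro i _
      by_cases hle : (j' : ℕ) ≤ (i : ℕ)
      · rw [if_pos hle, if_pos ⟨rfl, hle⟩]
      · rw [if_neg hle, if_neg (by intro hc; exact hle hc.2), zero_mul]
    · intro b _ hb
      apply Finset.sum_eq_zero
      intro i _
      rw [if_neg (fun hc => hb hc.1.symm), zero_mul]
    · simp
  -- Step 3: strong induction on `p + (m β - 1 - j)` kills all off-block derivatives.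
  have main : ∀ N, ∀ (p' : Fin (m α)) (j' : Fin (m β)),
      (p' : ℕ) + (m β - 1 - (j' : ℕ)) = N →
      pd (⟨β, j'⟩ : (γ : Fin r) × Fin (m γ)) (fun v => E v ⟨α, p'⟩) u = 0 := by
    intro N
    induction N using Nat.strong_induction_on with
    | _ N ih =>
      intro p' j' hmeas
      have hkey := key2 p' j'
      have hL : (∑ i : Fin (m β),
          if (j' : ℕ) ≤ (i : ℕ) then
            E u ⟨β, ⟨(i : ℕ) - (j' : ℕ), Nat.lt_of_le_of_lt (Nat.sub_le _ _) i.isLt⟩⟩ *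
              pd (⟨β, i⟩ : (γ : Fin r) × Fin (m γ)) (fun v => E v ⟨α, p'⟩) u
          else 0)
          = E u ⟨β, ⟨0, hm β⟩⟩ *
              pd (⟨β, j'⟩ : (γ : Fin r) × Fin (m γ)) (fun v => E v ⟨α, p'⟩) u := by
        rw [Finset.sum_eq_single j']
        · rw [if_pos (le_refl _)]
          simp only [Nat.sub_self]
        · intro i _ hne
          by_cases hle : (j' : ℕ) ≤ (i : ℕ)
          · rw [if_pos hle]
            have hlt : (j' : ℕ) < (i : ℕ) :=
              lt_of_le_of_ne hle (fun h => hne (Fin.ext h.symm))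
            have hz : pd (⟨β, i⟩ : (γ : Fin r) × Fin (m γ)) (fun v => E v ⟨α, p'⟩) u = 0 := by
              apply ih ((p' : ℕ) + (m β - 1 - (i : ℕ))) _ p' i rfl
              have hib := i.isLt
              omega
            rw [hz, mul_zero]
          · rw [if_neg hle]
        · simp
      have hR : (∑ a : Fin (m α), ∑ e : Fin (m α),
          (if (a : ℕ) + (e : ℕ) = (p' : ℕ) then
            E u ⟨α, a⟩ * pd (⟨β, j'⟩ : (γ : Fin r) × Fin (m γ)) (fun v => E v ⟨α, e⟩) u
          else 0))
          = E u ⟨α, ⟨0, hm α⟩⟩ *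
              pd (⟨β, j'⟩ : (γ : Fin r) × Fin (m γ)) (fun v => E v ⟨α, p'⟩) u := by
        rw [Finset.sum_eq_single (⟨0, hm α⟩ : Fin (m α))]
        · rw [Finset.sum_eq_single p']
          · rw [if_pos (Nat.zero_add _)]
          · intro e _ hne
            rw [if_neg]
            intro hc
            have hc' : (0 : ℕ) + (e : ℕ) = (p' : ℕ) := hc
            exact hne (Fin.ext (by omega))
          · simp
        · intro a _ hna
          apply Finset.sum_eq_zero
          intro e _
          by_cases hc : (a : ℕ) + (e : ℕ) = (p' : ℕ)
          · rw [if_pos hc]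
            have ha0 : (a : ℕ) ≠ 0 := fun h => hna (Fin.ext h)
            have hz : pd (⟨β, j'⟩ : (γ : Fin r) × Fin (m γ)) (fun v => E v ⟨α, e⟩) u = 0 := by
              apply ih ((e : ℕ) + (m β - 1 - (j' : ℕ))) _ e j' rfl
              omega
            rw [hz, mul_zero]
          · rw [if_neg hc]
        · simp
      rw [hL, hR] at hkey
      have hd := hdist u hu α β hab
      have hz : (E u ⟨β, ⟨0, hm β⟩⟩ - E u ⟨α, ⟨0, hm α⟩⟩) *
          pd (⟨β, j'⟩ : (γ : Fin r) × Fin (m γ)) (fun v => E v ⟨α, p'⟩) u = 0 := by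
        rw [sub_mul, hkey]
        ring
      rcases mul_eq_zero.mp hz with h | h
      · exact absurd (sub_eq_zero.mp h).symm hd
      · exact h
  exact main _ p j rfl
end

section
/- Let U ⊆ ℝ^n be open and let E be a smooth vector field on U whose components split by blocks, i.e. ∂_{j(β)} E^{p(α)} = 0 on U whenever β ≠ α. For each α ∈ {1,…,r} let E_{(α)} denote the vector field whose components in block α equal those of E and whose components in all other blocks are zero, and let L = E∘ and L_α = E_{(α)}∘ be the corresponding pointwise multiplication operators. Then the Nijenhuis torsion of L vanishes on U if and only if the Nijenhuis torsion of L_α vanishes on U for every α ∈ {1,…,r}. -/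
open scoped BigOperators

section BPAux
variable {r : ℕ} {m : Fin r → ℕ}

lemma bp_congr {f f' w w' : ((α : Fin r) × Fin (m α)) → ℝ} {β : Fin r}
    (hf : ∀ j : Fin (m β), f ⟨β, j⟩ = f' ⟨β, j⟩)
    (hw : ∀ j : Fin (m β), w ⟨β, j⟩ = w' ⟨β, j⟩) (k : Fin (m β)) :
    blockProd m f w ⟨β, k⟩ = blockProd m f' w' ⟨β, k⟩ := by
  unfold blockProd
  refine Finset.sum_congr rfl fun j _ => Finset.sum_congr rfl fun k' _ => ?_
  rw [hf j, hw k']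

lemma bp_zero_left {f w : ((α : Fin r) × Fin (m α)) → ℝ} {β : Fin r}
    (hf : ∀ j : Fin (m β), f ⟨β, j⟩ = 0) (k : Fin (m β)) :
    blockProd m f w ⟨β, k⟩ = 0 := by
  unfold blockProd
  refine Finset.sum_eq_zero fun j _ => Finset.sum_eq_zero fun k' _ => ?_
  rw [hf j]; simp

lemma bp_mask_off {f w : ((α : Fin r) × Fin (m α)) → ℝ} {β γ : Fin r}
    (h : β ≠ γ) (k : Fin (m β)) :
    blockProd m (fun i => if i.1 = γ then f i else 0) w ⟨β, k⟩ = 0 :=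
  bp_zero_left (fun j => by simp [h]) k

lemma bp_mask_on (f w : ((α : Fin r) × Fin (m α)) → ℝ) (γ : Fin r) (k : Fin (m γ)) :
    blockProd m (fun i => if i.1 = γ then f i else 0) w ⟨γ, k⟩ = blockProd m f w ⟨γ, k⟩ :=
  bp_congr (fun j => by simp) (fun _ => rfl) k

lemma bp_smul_right (f w : ((α : Fin r) × Fin (m α)) → ℝ) (c : ℝ)
    (t : (α : Fin r) × Fin (m α)) :
    blockProd m f (fun i => c * w i) t = c * blockProd m f w t := by
  unfold blockProd
  rw [Finset.mul_sum]
  refine Finset.sum_congr rfl fun j _ => ?_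
  rw [Finset.mul_sum]
  refine Finset.sum_congr rfl fun k' _ => ?_
  by_cases h : (j : ℕ) + (k' : ℕ) = (t.2 : ℕ) <;> simp [h] <;> ring

lemma bp_sub_right (f w w' : ((α : Fin r) × Fin (m α)) → ℝ)
    (t : (α : Fin r) × Fin (m α)) :
    blockProd m f w t - blockProd m f w' t = blockProd m f (fun i => w i - w' i) t := by
  unfold blockProd
  rw [← Finset.sum_sub_distrib]
  refine Finset.sum_congr rfl fun j _ => ?_
  rw [← Finset.sum_sub_distrib]
  refine Finset.sum_congr rfl fun k' _ => ?_
  by_cases h : (j : ℕ) + (k' : ℕ) = (t.2 : ℕ) <;> simp [h] <;> ring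

lemma bp_sum_right {σ : Type*} (F : Finset σ) (f : ((α : Fin r) × Fin (m α)) → ℝ)
    (W : σ → ((α : Fin r) × Fin (m α)) → ℝ) (t : (α : Fin r) × Fin (m α)) :
    blockProd m f (fun i => ∑ s ∈ F, W s i) t = ∑ s ∈ F, blockProd m f (W s) t := by
  unfold blockProd
  calc (∑ j : Fin (m t.1), ∑ k : Fin (m t.1),
        if (j : ℕ) + (k : ℕ) = (t.2 : ℕ) then f ⟨t.1, j⟩ * ∑ s ∈ F, W s ⟨t.1, k⟩ else 0)
      = ∑ j : Fin (m t.1), ∑ k : Fin (m t.1), ∑ s ∈ F,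
        (if (j : ℕ) + (k : ℕ) = (t.2 : ℕ) then f ⟨t.1, j⟩ * W s ⟨t.1, k⟩ else 0) := by
        refine Finset.sum_congr rfl fun j _ => Finset.sum_congr rfl fun k _ => ?_
        by_cases h : (j : ℕ) + (k : ℕ) = (t.2 : ℕ)
        · simp [h, Finset.mul_sum]
        · simp [h]
    _ = ∑ j : Fin (m t.1), ∑ s ∈ F, ∑ k : Fin (m t.1),
        (if (j : ℕ) + (k : ℕ) = (t.2 : ℕ) then f ⟨t.1, j⟩ * W s ⟨t.1, k⟩ else 0) :=
        Finset.sum_congr rfl fun j _ => Finset.sum_comm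
    _ = ∑ s ∈ F, ∑ j : Fin (m t.1), ∑ k : Fin (m t.1),
        (if (j : ℕ) + (k : ℕ) = (t.2 : ℕ) then f ⟨t.1, j⟩ * W s ⟨t.1, k⟩ else 0) :=
        Finset.sum_comm

end BPAux

section PDAux
variable {ι : Type*} [Fintype ι] [DecidableEq ι]

lemma pd_zero_fn (s : ι) (u : ι → ℝ) : pd s (fun _ => (0:ℝ)) u = 0 := by simp [pd]

lemma pd_sum {σ : Type*} (F : Finset σ) (f : σ → (ι → ℝ) → ℝ) (s : ι) (u : ι → ℝ)
    (hf : ∀ i ∈ F, DifferentiableAt ℝ (f i) u) :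
    pd s (fun v => ∑ i ∈ F, f i v) u = ∑ i ∈ F, pd s (f i) u := by
  unfold pd; rw [fderiv_fun_sum hf]; simp

lemma pd_mul (s : ι) (u : ι → ℝ) (f g : (ι → ℝ) → ℝ)
    (hf : DifferentiableAt ℝ f u) (hg : DifferentiableAt ℝ g u) :
    pd s (fun v => f v * g v) u = f u * pd s g u + g u * pd s f u := by
  unfold pd; rw [fderiv_fun_mul hf hg]; simp

end PDAux

section Main
variable {r : ℕ} {m : Fin r → ℕ}

lemma diffAt_bp (f g : (((α : Fin r) × Fin (m α)) → ℝ) → ((α : Fin r) × Fin (m α)) → ℝ)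
    (u : ((α : Fin r) × Fin (m α)) → ℝ)
    (hf : ∀ t, DifferentiableAt ℝ (fun v => f v t) u)
    (hg : ∀ t, DifferentiableAt ℝ (fun v => g v t) u)
    (t : (α : Fin r) × Fin (m α)) :
    DifferentiableAt ℝ (fun v => blockProd m (f v) (g v) t) u := by
  unfold blockProd
  apply DifferentiableAt.fun_sum; intro j _
  apply DifferentiableAt.fun_sum; intro k _
  by_cases h : (j : ℕ) + (k : ℕ) = (t.2 : ℕ)
  · simp only [h, if_true]
    exact (hf ⟨t.1, j⟩).mul (hg ⟨t.1, k⟩)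
  · simp only [h, if_false]
    exact differentiableAt_const 0

lemma pd_bp (s : (α : Fin r) × Fin (m α))
    (f g : (((α : Fin r) × Fin (m α)) → ℝ) → ((α : Fin r) × Fin (m α)) → ℝ)
    (u : ((α : Fin r) × Fin (m α)) → ℝ)
    (hf : ∀ t, DifferentiableAt ℝ (fun v => f v t) u)
    (hg : ∀ t, DifferentiableAt ℝ (fun v => g v t) u)
    (t : (α : Fin r) × Fin (m α)) :
    pd s (fun v => blockProd m (f v) (g v) t) u
      = blockProd m (f u) (fun k => pd s (fun v => g v k) u) t
        + blockProd m (fun j => pd s (fun v => f v j) u) (g u) t := by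
  have key : pd s (fun v => blockProd m (f v) (g v) t) u
      = ∑ j : Fin (m t.1), ∑ k : Fin (m t.1),
        (if (j : ℕ) + (k : ℕ) = (t.2 : ℕ) then
          f u ⟨t.1, j⟩ * pd s (fun v => g v ⟨t.1, k⟩) u
            + g u ⟨t.1, k⟩ * pd s (fun v => f v ⟨t.1, j⟩) u else 0) := by
    unfold blockProd
    rw [pd_sum]
    · refine Finset.sum_congr rfl fun j _ => ?_
      rw [pd_sum]
      · refine Finset.sum_congr rfl fun k _ => ?_
        by_cases h : (j : ℕ) + (k : ℕ) = (t.2 : ℕ)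
        · simp only [h, if_true]
          exact pd_mul s u _ _ (hf ⟨t.1, j⟩) (hg ⟨t.1, k⟩)
        · simp only [h, if_false]
          simp [pd]
      · intro k _
        by_cases h : (j : ℕ) + (k : ℕ) = (t.2 : ℕ)
        · simp only [h, if_true]; exact (hf ⟨t.1, j⟩).mul (hg ⟨t.1, k⟩)
        · simp only [h, if_false]; exact differentiableAt_const 0
    · intro j _
      apply DifferentiableAt.fun_sum; intro k _
      by_cases h : (j : ℕ) + (k : ℕ) = (t.2 : ℕ)
      · simp only [h, if_true]; exact (hf ⟨t.1, j⟩).mul (hg ⟨t.1, k⟩)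
      · simp only [h, if_false]; exact differentiableAt_const 0
  rw [key]
  unfold blockProd
  rw [← Finset.sum_add_distrib]
  refine Finset.sum_congr rfl fun j _ => ?_
  rw [← Finset.sum_add_distrib]
  refine Finset.sum_congr rfl fun k _ => ?_
  by_cases h : (j : ℕ) + (k : ℕ) = (t.2 : ℕ) <;> simp [h] <;> ring

/-- Lemma A: the single-block torsion vanishes identically off the block. -/
lemma nij_mask_off (E X Y : (((α : Fin r) × Fin (m α)) → ℝ) → ((α : Fin r) × Fin (m α)) → ℝ)
    (γ δ : Fin r) (h : δ ≠ γ) (u : ((α : Fin r) × Fin (m α)) → ℝ) (k : Fin (m δ)) :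
    nij (fun v w => blockProd m (fun i => if i.1 = γ then E v i else 0) w) X Y u ⟨δ, k⟩ = 0 := by
  have hz : ∀ Z : (((α : Fin r) × Fin (m α)) → ℝ) → ((α : Fin r) × Fin (m α)) → ℝ,
      (fun v => blockProd m (fun i => if i.1 = γ then E v i else 0) (Z v) ⟨δ, k⟩)
        = fun _ => (0:ℝ) :=
    fun Z => funext fun v => bp_mask_off h k
  simp only [nij, Pi.sub_apply, Pi.add_apply, lieBr]
  rw [hz X, hz Y]
  simp [pd_zero_fn, bp_mask_off h k]

end Main

section Crux
variable {r : ℕ} {m : Fin r → ℕ}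

lemma nij_block (U : Set (((α : Fin r) × Fin (m α)) → ℝ)) (hU : IsOpen U)
    (E : (((α : Fin r) × Fin (m α)) → ℝ) → ((α : Fin r) × Fin (m α)) → ℝ)
    (hE : ContDiffOn ℝ (⊤ : ℕ∞) E U)
    (hsplit : ∀ α β : Fin r, α ≠ β → ∀ p : Fin (m α), ∀ j : Fin (m β),
      ∀ u ∈ U, pd (⟨β, j⟩ : (α : Fin r) × Fin (m α)) (fun v => E v ⟨α, p⟩) u = 0)
    (γ : Fin r)
    (X Y : (((α : Fin r) × Fin (m α)) → ℝ) → ((α : Fin r) × Fin (m α)) → ℝ)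
    (hX : ContDiffOn ℝ (⊤ : ℕ∞) X U) (hY : ContDiffOn ℝ (⊤ : ℕ∞) Y U)
    {u : ((α : Fin r) × Fin (m α)) → ℝ} (hu : u ∈ U) (i : Fin (m γ)) :
    nij (fun v w => blockProd m (E v) w) X Y u ⟨γ, i⟩
      = nij (fun v w => blockProd m (fun t => if t.1 = γ then E v t else 0) w) X Y u ⟨γ, i⟩ := by
  have hEd : ∀ t, DifferentiableAt ℝ (fun v => E v t) u :=
    fun t => (differentiableAt_pi.mp ((hE.contDiffAt (hU.mem_nhds hu)).differentiableAt (by simp))) t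
  have hXd : ∀ t, DifferentiableAt ℝ (fun v => X v t) u :=
    fun t => (differentiableAt_pi.mp ((hX.contDiffAt (hU.mem_nhds hu)).differentiableAt (by simp))) t
  have hYd : ∀ t, DifferentiableAt ℝ (fun v => Y v t) u :=
    fun t => (differentiableAt_pi.mp ((hY.contDiffAt (hU.mem_nhds hu)).differentiableAt (by simp))) t
  have hpdE0 : ∀ s : (α : Fin r) × Fin (m α), s.1 ≠ γ → ∀ j : Fin (m γ),
      pd s (fun v => E v ⟨γ, j⟩) u = 0 := by
    rintro ⟨β, b⟩ hs j
    exact hsplit γ β (fun hh => hs hh.symm) j b u hu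
  have hAfun : ∀ k : Fin (m γ),
      (fun v => blockProd m (fun t => if t.1 = γ then E v t else 0) (X v) ⟨γ, k⟩)
        = fun v => blockProd m (E v) (X v) ⟨γ, k⟩ :=
    fun k => funext fun v => bp_mask_on (E v) (X v) γ k
  have hBfun : ∀ k : Fin (m γ),
      (fun v => blockProd m (fun t => if t.1 = γ then E v t else 0) (Y v) ⟨γ, k⟩)
        = fun v => blockProd m (E v) (Y v) ⟨γ, k⟩ :=
    fun k => funext fun v => bp_mask_on (E v) (Y v) γ k
  have hpdA : ∀ s : (α : Fin r) × Fin (m α), s.1 ≠ γ → ∀ k : Fin (m γ),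
      pd s (fun v => blockProd m (E v) (X v) ⟨γ, k⟩) u
        = blockProd m (E u) (fun k' => pd s (fun v => X v k') u) ⟨γ, k⟩ := by
    intro s hs k
    rw [pd_bp s E X u hEd hXd ⟨γ, k⟩,
      bp_zero_left (f := fun j => pd s (fun v => E v j) u) (w := X u)
        (fun j => hpdE0 s hs j) k, add_zero]
  have hpdB : ∀ s : (α : Fin r) × Fin (m α), s.1 ≠ γ → ∀ k : Fin (m γ),
      pd s (fun v => blockProd m (E v) (Y v) ⟨γ, k⟩) u
        = blockProd m (E u) (fun k' => pd s (fun v => Y v k') u) ⟨γ, k⟩ := by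
    intro s hs k
    rw [pd_bp s E Y u hEd hYd ⟨γ, k⟩,
      bp_zero_left (f := fun j => pd s (fun v => E v j) u) (w := Y u)
        (fun j => hpdE0 s hs j) k, add_zero]
  -- E1
  have e1 : lieBr (fun v => blockProd m (E v) (X v)) (fun v => blockProd m (E v) (Y v)) u ⟨γ, i⟩
      - lieBr (fun v => blockProd m (fun t => if t.1 = γ then E v t else 0) (X v))
              (fun v => blockProd m (fun t => if t.1 = γ then E v t else 0) (Y v)) u ⟨γ, i⟩
      = (∑ s : (α : Fin r) × Fin (m α),
          (blockProd m (E u) (X u) s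
            - blockProd m (fun t => if t.1 = γ then E u t else 0) (X u) s)
            * pd s (fun v => blockProd m (E v) (Y v) ⟨γ, i⟩) u)
        - ∑ s : (α : Fin r) × Fin (m α),
          (blockProd m (E u) (Y u) s
            - blockProd m (fun t => if t.1 = γ then E u t else 0) (Y u) s)
            * pd s (fun v => blockProd m (E v) (X v) ⟨γ, i⟩) u := by
    simp only [lieBr]
    rw [hAfun i, hBfun i]
    rw [← Finset.sum_sub_distrib, ← Finset.sum_sub_distrib]
    refine Finset.sum_congr rfl fun s _ => ?_
    ring
  -- E2
  have e2 : blockProd m (E u)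
        (lieBr (fun v => blockProd m (E v) (X v)) Y u) ⟨γ, i⟩
      - blockProd m (E u)
        (lieBr (fun v => blockProd m (fun t => if t.1 = γ then E v t else 0) (X v)) Y u) ⟨γ, i⟩
      = blockProd m (E u) (fun k => ∑ s : (α : Fin r) × Fin (m α),
          (blockProd m (E u) (X u) s
            - blockProd m (fun t => if t.1 = γ then E u t else 0) (X u) s)
            * pd s (fun v => Y v k) u) ⟨γ, i⟩ := by
    rw [bp_sub_right]
    refine bp_congr (fun _ => rfl) (fun k => ?_) i
    simp only [lieBr]
    rw [hAfun k]
    rw [← Finset.sum_sub_distrib]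
    refine Finset.sum_congr rfl fun s _ => ?_
    ring
  -- E3
  have e3 : blockProd m (E u)
        (lieBr X (fun v => blockProd m (fun t => if t.1 = γ then E v t else 0) (Y v)) u) ⟨γ, i⟩
      - blockProd m (E u)
        (lieBr X (fun v => blockProd m (E v) (Y v)) u) ⟨γ, i⟩
      = blockProd m (E u) (fun k => ∑ s : (α : Fin r) × Fin (m α),
          (blockProd m (E u) (Y u) s
            - blockProd m (fun t => if t.1 = γ then E u t else 0) (Y u) s)
            * pd s (fun v => X v k) u) ⟨γ, i⟩ := by
    rw [bp_sub_right]
    refine bp_congr (fun _ => rfl) (fun k => ?_) i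
    simp only [lieBr]
    rw [hBfun k]
    rw [← Finset.sum_sub_distrib]
    refine Finset.sum_congr rfl fun s _ => ?_
    ring
  -- E4
  have e4 : (∑ s : (α : Fin r) × Fin (m α),
        (blockProd m (E u) (X u) s
          - blockProd m (fun t => if t.1 = γ then E u t else 0) (X u) s)
          * pd s (fun v => blockProd m (E v) (Y v) ⟨γ, i⟩) u)
      = blockProd m (E u) (fun k => ∑ s : (α : Fin r) × Fin (m α),
          (blockProd m (E u) (X u) s
            - blockProd m (fun t => if t.1 = γ then E u t else 0) (X u) s)
            * pd s (fun v => Y v k) u) ⟨γ, i⟩ := by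
    rw [bp_sum_right Finset.univ (E u)
      (fun s k => (blockProd m (E u) (X u) s
        - blockProd m (fun t => if t.1 = γ then E u t else 0) (X u) s)
        * pd s (fun v => Y v k) u) ⟨γ, i⟩]
    refine Finset.sum_congr rfl fun s _ => ?_
    rw [bp_smul_right]
    obtain ⟨β, b⟩ := s
    by_cases hs : β = γ
    · subst hs
      rw [bp_mask_on (E u) (X u) β b, sub_self, zero_mul, zero_mul]
    · rw [hpdB ⟨β, b⟩ hs i]
  -- E5
  have e5 : (∑ s : (α : Fin r) × Fin (m α),
        (blockProd m (E u) (Y u) s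
          - blockProd m (fun t => if t.1 = γ then E u t else 0) (Y u) s)
          * pd s (fun v => blockProd m (E v) (X v) ⟨γ, i⟩) u)
      = blockProd m (E u) (fun k => ∑ s : (α : Fin r) × Fin (m α),
          (blockProd m (E u) (Y u) s
            - blockProd m (fun t => if t.1 = γ then E u t else 0) (Y u) s)
            * pd s (fun v => X v k) u) ⟨γ, i⟩ := by
    rw [bp_sum_right Finset.univ (E u)
      (fun s k => (blockProd m (E u) (Y u) s
        - blockProd m (fun t => if t.1 = γ then E u t else 0) (Y u) s)
        * pd s (fun v => X v k) u) ⟨γ, i⟩]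
    refine Finset.sum_congr rfl fun s _ => ?_
    rw [bp_smul_right]
    obtain ⟨β, b⟩ := s
    by_cases hs : β = γ
    · subst hs
      rw [bp_mask_on (E u) (Y u) β b, sub_self, zero_mul, zero_mul]
    · rw [hpdA ⟨β, b⟩ hs i]
  -- outer mask removals
  have h2m : blockProd m (fun t => if t.1 = γ then E u t else 0)
        (lieBr (fun v => blockProd m (fun t => if t.1 = γ then E v t else 0) (X v)) Y u) ⟨γ, i⟩
      = blockProd m (E u)
        (lieBr (fun v => blockProd m (fun t => if t.1 = γ then E v t else 0) (X v)) Y u) ⟨γ, i⟩ :=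
    bp_mask_on _ _ γ i
  have h3m : blockProd m (fun t => if t.1 = γ then E u t else 0)
        (lieBr X (fun v => blockProd m (fun t => if t.1 = γ then E v t else 0) (Y v)) u) ⟨γ, i⟩
      = blockProd m (E u)
        (lieBr X (fun v => blockProd m (fun t => if t.1 = γ then E v t else 0) (Y v)) u) ⟨γ, i⟩ :=
    bp_mask_on _ _ γ i
  have h4m : blockProd m (fun t => if t.1 = γ then E u t else 0)
        (blockProd m (fun t => if t.1 = γ then E u t else 0) (lieBr X Y u)) ⟨γ, i⟩
      = blockProd m (E u) (blockProd m (E u) (lieBr X Y u)) ⟨γ, i⟩ := by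
    rw [bp_mask_on]
    exact bp_congr (fun _ => rfl) (fun k => bp_mask_on (E u) (lieBr X Y u) γ k) i
  simp only [nij, Pi.sub_apply, Pi.add_apply]
  rw [h2m, h3m, h4m]
  linear_combination e1 - e2 + e3 + e4 - e5

end Crux


/-- for a vector field `E` whose components split by blocks, the Nijenhuis
torsion of `L = E∘` vanishes on `U` iff the Nijenhuis torsion of each single-block part
`L_α = E_{(α)}∘` vanishes on `U`. -/
theorem stmt1 {r : ℕ} (m : Fin r → ℕ)
    (U : Set (((α : Fin r) × Fin (m α)) → ℝ)) (hU : IsOpen U)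
    (E : (((α : Fin r) × Fin (m α)) → ℝ) → ((α : Fin r) × Fin (m α)) → ℝ)
    (hE : ContDiffOn ℝ (⊤ : ℕ∞) E U)
    (hsplit : ∀ α β : Fin r, α ≠ β → ∀ p : Fin (m α), ∀ j : Fin (m β),
      ∀ u ∈ U, pd (⟨β, j⟩ : (α : Fin r) × Fin (m α)) (fun v => E v ⟨α, p⟩) u = 0) :
    (∀ X Y : (((α : Fin r) × Fin (m α)) → ℝ) → ((α : Fin r) × Fin (m α)) → ℝ,
      ContDiffOn ℝ (⊤ : ℕ∞) X U → ContDiffOn ℝ (⊤ : ℕ∞) Y U →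
      ∀ u ∈ U, nij (fun v w => blockProd m (E v) w) X Y u = 0)
    ↔
    (∀ α : Fin r,
      ∀ X Y : (((α : Fin r) × Fin (m α)) → ℝ) → ((α : Fin r) × Fin (m α)) → ℝ,
      ContDiffOn ℝ (⊤ : ℕ∞) X U → ContDiffOn ℝ (⊤ : ℕ∞) Y U →
      ∀ u ∈ U,
        nij (fun v w => blockProd m
          (fun i => if i.1 = α then E v i else 0) w) X Y u = 0) := by
  constructor
  · intro h α X Y hX hY u hu
    funext t
    obtain ⟨δ, k⟩ := t
    by_cases hδ : δ = α
    · subst hδ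
      rw [Pi.zero_apply, ← nij_block U hU E hE hsplit δ X Y hX hY hu k]
      exact congrFun (h X Y hX hY u hu) ⟨δ, k⟩
    · rw [Pi.zero_apply]
      exact nij_mask_off E X Y α δ hδ u k
  · intro h X Y hX hY u hu
    funext t
    obtain ⟨δ, k⟩ := t
    rw [Pi.zero_apply, nij_block U hU E hE hsplit δ X Y hX hY hu k]
    exact congrFun (h δ X Y hX hY u hu) ⟨δ, k⟩
end

section
/- Let n ≥ 2, let U ⊆ ℝ^n be open, and let V, μ^1,…,μ^n be smooth functions on U satisfying equations (EQ2) for all i, j ∈ {1,…,n}. Then ∂_j V = 0 identically on U for every j ∈ {2,…,n}. -/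
open scoped BigOperators

/-- Single-block structure constants `c^i_{jk} = δ^i_{j+k−1}` (0-based: `1` iff `j+k = i`). -/
noncomputable def sbc {n : ℕ} (i j k : Fin n) : ℝ :=
  if (j : ℕ) + (k : ℕ) = (i : ℕ) then 1 else 0

/-- Components of the unit: `e^i = δ^i_1` (0-based: `1` iff `i = 0`). -/
noncomputable def sbe {n : ℕ} (i : Fin n) : ℝ :=
  if (i : ℕ) = 0 then 1 else 0

/-- Left-hand side of equation (EQ1) of the single-block generalised Gibbons–Tsarev system:
`μ^t(c^s_{ti} ∂_s∂_j V − c^s_{tj} ∂_s∂_i V) − (c^m_{js} ∂_i μ^s − c^m_{is} ∂_j μ^s) ∂_m V`. -/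
noncomputable def GT1 {n : ℕ} (μ : (Fin n → ℝ) → (Fin n → ℝ)) (V : (Fin n → ℝ) → ℝ)
    (i j : Fin n) (u : Fin n → ℝ) : ℝ :=
  (∑ t, ∑ s, μ u t * (sbc s t i * pd s (fun v => pd j V v) u
                      - sbc s t j * pd s (fun v => pd i V v) u))
  - (∑ m', ∑ s, (sbc m' j s * pd i (fun v => μ v s) u
                 - sbc m' i s * pd j (fun v => μ v s) u) * pd m' V u)

/-- Left-hand side of equation (EQ2) of the single-block generalised Gibbons–Tsarev system:
`μ^h(c^i_{hk} ∂_j μ^k + c^i_{jk} ∂_h μ^k − c^k_{jh} ∂_k μ^i) − μ^h c^i_{js} c^s_{hk} ∂_1 μ^k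
 + e^i ∂_j V − δ^i_j ∂_1 V`. -/
noncomputable def GT2 {n : ℕ} (μ : (Fin n → ℝ) → (Fin n → ℝ)) (V : (Fin n → ℝ) → ℝ)
    (i j : Fin n) (u : Fin n → ℝ) : ℝ :=
  (∑ h, ∑ k, μ u h * (sbc i h k * pd j (fun v => μ v k) u
                      + sbc i j k * pd h (fun v => μ v k) u
                      - sbc k j h * pd k (fun v => μ v i) u))
  - (∑ h, ∑ s, ∑ k, ∑ t, μ u h * sbc i j s * sbc s h k * sbe t * pd t (fun v => μ v k) u)
  + sbe i * pd j V u
  - (if i = j then 1 else 0) * (∑ t, sbe t * pd t V u)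



section Aux
open Finset

private lemma tri_swap (f : ℕ → ℕ → ℝ) : ∀ N : ℕ,
    ∑ k ∈ range N, ∑ h ∈ range (N - k), f h k
      = ∑ k ∈ range N, ∑ h ∈ range (k + 1), f h (k - h) := by
  intro N
  induction N with
  | zero => simp
  | succ N ih =>
    rw [Finset.sum_range_succ, Finset.sum_range_succ]
    have h1 : ∀ k ∈ range N, ∑ h ∈ range (N + 1 - k), f h k
        = (∑ h ∈ range (N - k), f h k) + f (N - k) k := by
      intro k hk
      rw [mem_range] at hk
      have : N + 1 - k = (N - k) + 1 := by omega
      rw [this, Finset.sum_range_succ]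
    rw [Finset.sum_congr rfl h1, Finset.sum_add_distrib, ih]
    have h2 : ∑ k ∈ range N, f (N - k) k = ∑ k ∈ range N, f (k + 1) (N - 1 - k) := by
      rw [← Finset.sum_range_reflect]
      refine Finset.sum_congr rfl fun k hk => ?_
      rw [mem_range] at hk
      congr 1 <;> omega
    rw [h2]
    have h3 : ∑ h ∈ range (N + 1), f h (N - h)
        = (∑ h ∈ range N, f (h + 1) (N - (h + 1))) + f 0 (N - 0) := Finset.sum_range_succ' _ _
    have h4 : ∀ h ∈ range N, f (h + 1) (N - (h + 1)) = f (h + 1) (N - 1 - h) := by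
      intro h _; congr 1; omega
    rw [h3, Finset.sum_congr rfl h4, show N + 1 - N = 1 from by omega,
      Finset.sum_range_one]
    simp only [Nat.sub_zero]
    ring

private lemma sum_sbc_k {n : ℕ} (i h : Fin n) (x : Fin n → ℝ) :
    ∑ k : Fin n, sbc i h k * x k =
      if (h : ℕ) ≤ (i : ℕ) then
        x ⟨(i : ℕ) - (h : ℕ), by have := i.isLt; omega⟩ else 0 := by
  by_cases hle : (h : ℕ) ≤ (i : ℕ)
  · rw [if_pos hle,
      Finset.sum_eq_single (⟨(i : ℕ) - (h : ℕ), by have := i.isLt; omega⟩ : Fin n)]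
    · have hc : (h : ℕ) + ((i : ℕ) - (h : ℕ)) = (i : ℕ) := by omega
      simp [sbc, hc]
    · intro k _ hk
      have : (h : ℕ) + (k : ℕ) ≠ (i : ℕ) := by
        intro hc; apply hk; apply Fin.ext; simp; omega
      simp [sbc, this]
    · simp
  · rw [if_neg hle]
    refine Finset.sum_eq_zero fun k _ => ?_
    have : (h : ℕ) + (k : ℕ) ≠ (i : ℕ) := by omega
    simp [sbc, this]

private lemma sum_sbc_k' {n : ℕ} (j h : Fin n) (x : Fin n → ℝ) :
    ∑ k : Fin n, sbc k j h * x k =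
      if hlt : (j : ℕ) + (h : ℕ) < n then x ⟨(j : ℕ) + (h : ℕ), hlt⟩ else 0 := by
  by_cases hlt : (j : ℕ) + (h : ℕ) < n
  · rw [dif_pos hlt, Finset.sum_eq_single (⟨(j : ℕ) + (h : ℕ), hlt⟩ : Fin n)]
    · simp [sbc]
    · intro k _ hk
      have : (j : ℕ) + (h : ℕ) ≠ (k : ℕ) := by
        intro hc; apply hk; apply Fin.ext; simp; omega
      simp [sbc, this]
    · simp
  · rw [dif_neg hlt]
    refine Finset.sum_eq_zero fun k _ => ?_
    have : (j : ℕ) + (h : ℕ) ≠ (k : ℕ) := by have := k.isLt; omega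
    simp [sbc, this]

/-- `μ^h` extended to a total function of a natural-number index. -/
noncomputable def Af {n : ℕ} (μ : (Fin n → ℝ) → (Fin n → ℝ)) (u : Fin n → ℝ) (h : ℕ) : ℝ :=
  if hh : h < n then μ u ⟨h, hh⟩ else 0

/-- `∂_p μ^q` extended to a total function of natural-number indices. -/
noncomputable def Df {n : ℕ} (μ : (Fin n → ℝ) → (Fin n → ℝ)) (u : Fin n → ℝ) (p q : ℕ) : ℝ :=
  if hp : p < n then if hq : q < n then pd (⟨p, hp⟩ : Fin n) (fun v => μ v ⟨q, hq⟩) u else 0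
  else 0

/-- `∂_p V` extended to a total function of a natural-number index. -/
noncomputable def Wf {n : ℕ} (V : (Fin n → ℝ) → ℝ) (u : Fin n → ℝ) (p : ℕ) : ℝ :=
  if hp : p < n then pd (⟨p, hp⟩ : Fin n) V u else 0

private lemma gt2_eval {n : ℕ} (μ : (Fin n → ℝ) → (Fin n → ℝ)) (V : (Fin n → ℝ) → ℝ)
    (u : Fin n → ℝ) (i j : ℕ) (hj : j < n) (hij : i < j) :
    GT2 μ V ⟨i, lt_trans hij hj⟩ ⟨j, hj⟩ u =
      (∑ h ∈ range (i + 1), Af μ u h * Df μ u j (i - h))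
      - (∑ h ∈ range (n - j), Af μ u h * Df μ u (j + h) i)
      + (if i = 0 then Wf V u j else 0) := by
  have hi : i < n := lt_trans hij hj
  unfold GT2
  have hquad : (∑ h : Fin n, ∑ s : Fin n, ∑ k : Fin n, ∑ t : Fin n,
      μ u h * sbc (⟨i, hi⟩ : Fin n) (⟨j, hj⟩ : Fin n) s * sbc s h k * sbe t
        * pd t (fun v => μ v k) u) = 0 := by
    refine Finset.sum_eq_zero fun h _ => ?_
    refine Finset.sum_eq_zero fun s _ => ?_
    have hz : sbc (⟨i, hi⟩ : Fin n) (⟨j, hj⟩ : Fin n) s = 0 := by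
      have hne : ((⟨j, hj⟩ : Fin n) : ℕ) + (s : ℕ) ≠ ((⟨i, hi⟩ : Fin n) : ℕ) := by
        show j + (s : ℕ) ≠ i; omega
      simp [sbc, hne]
    simp [hz]
  have hdel : (if (⟨i, hi⟩ : Fin n) = (⟨j, hj⟩ : Fin n) then (1 : ℝ) else 0) = 0 := by
    have : (⟨i, hi⟩ : Fin n) ≠ (⟨j, hj⟩ : Fin n) := by
      simp [Fin.ext_iff]; omega
    simp [this]
  have hsbe : sbe (⟨i, hi⟩ : Fin n) * pd (⟨j, hj⟩ : Fin n) V u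
      = (if i = 0 then Wf V u j else 0) := by
    unfold sbe Wf
    rw [dif_pos hj]
    split <;> simp
  have hmain : (∑ h : Fin n, ∑ k : Fin n,
      μ u h * (sbc (⟨i, hi⟩ : Fin n) h k * pd (⟨j, hj⟩ : Fin n) (fun v => μ v k) u
        + sbc (⟨i, hi⟩ : Fin n) (⟨j, hj⟩ : Fin n) k * pd h (fun v => μ v k) u
        - sbc k (⟨j, hj⟩ : Fin n) h * pd k (fun v => μ v (⟨i, hi⟩ : Fin n)) u))
      = (∑ h ∈ range (i + 1), Af μ u h * Df μ u j (i - h))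
        - (∑ h ∈ range (n - j), Af μ u h * Df μ u (j + h) i) := by
    have step1 : ∀ h : Fin n, (∑ k : Fin n,
        μ u h * (sbc (⟨i, hi⟩ : Fin n) h k * pd (⟨j, hj⟩ : Fin n) (fun v => μ v k) u
          + sbc (⟨i, hi⟩ : Fin n) (⟨j, hj⟩ : Fin n) k * pd h (fun v => μ v k) u
          - sbc k (⟨j, hj⟩ : Fin n) h * pd k (fun v => μ v (⟨i, hi⟩ : Fin n)) u))
        = μ u h * (if (h : ℕ) ≤ i then Df μ u j (i - (h : ℕ)) else 0)
          - μ u h * (if j + (h : ℕ) < n then Df μ u (j + (h : ℕ)) i else 0) := by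
      intro h
      rw [← Finset.mul_sum, Finset.sum_sub_distrib, Finset.sum_add_distrib,
        sum_sbc_k, sum_sbc_k, sum_sbc_k']
      have hJI : ¬ (((⟨j, hj⟩ : Fin n) : ℕ) ≤ ((⟨i, hi⟩ : Fin n) : ℕ)) := by
        show ¬ (j ≤ i); omega
      rw [if_neg hJI, add_zero, mul_sub]
      congr 1
      · congr 1
        by_cases hle : (h : ℕ) ≤ i
        · rw [if_pos (show (h : ℕ) ≤ ((⟨i, hi⟩ : Fin n) : ℕ) from hle), if_pos hle]
          unfold Df
          rw [dif_pos hj, dif_pos (show i - (h : ℕ) < n by omega)]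
        · rw [if_neg (show ¬ ((h : ℕ) ≤ ((⟨i, hi⟩ : Fin n) : ℕ)) from hle), if_neg hle]
      · congr 1
        by_cases hlt : j + (h : ℕ) < n
        · rw [dif_pos (show ((⟨j, hj⟩ : Fin n) : ℕ) + (h : ℕ) < n from hlt), if_pos hlt]
          unfold Df
          rw [dif_pos hlt, dif_pos hi]
        · rw [dif_neg (show ¬ (((⟨j, hj⟩ : Fin n) : ℕ) + (h : ℕ) < n) from hlt),
            if_neg hlt]
    rw [Finset.sum_congr rfl fun h _ => step1 h, Finset.sum_sub_distrib]
    congr 1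
    · have conv1 : (∑ h : Fin n, μ u h * (if (h : ℕ) ≤ i then Df μ u j (i - (h : ℕ)) else 0))
          = ∑ h ∈ range n, Af μ u h * (if h ≤ i then Df μ u j (i - h) else 0) := by
        rw [← Fin.sum_univ_eq_sum_range
          (fun h => Af μ u h * (if h ≤ i then Df μ u j (i - h) else 0)) n]
        refine Finset.sum_congr rfl fun h _ => ?_
        unfold Af
        rw [dif_pos h.isLt]
      rw [conv1, ← Finset.sum_subset (Finset.range_subset_range.2 (by omega : i + 1 ≤ n))
        (fun x _ hx => ?_)]
      · refine Finset.sum_congr rfl fun h hh => ?_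
        rw [mem_range] at hh
        rw [if_pos (by omega : h ≤ i)]
      · rw [mem_range] at hx
        rw [if_neg (by omega : ¬ x ≤ i), mul_zero]
    · have conv2 : (∑ h : Fin n,
          μ u h * (if j + (h : ℕ) < n then Df μ u (j + (h : ℕ)) i else 0))
          = ∑ h ∈ range n, Af μ u h * (if j + h < n then Df μ u (j + h) i else 0) := by
        rw [← Fin.sum_univ_eq_sum_range
          (fun h => Af μ u h * (if j + h < n then Df μ u (j + h) i else 0)) n]
        refine Finset.sum_congr rfl fun h _ => ?_
        unfold Af
        rw [dif_pos h.isLt]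
      rw [conv2, ← Finset.sum_subset (Finset.range_subset_range.2 (by omega : n - j ≤ n))
        (fun x _ hx => ?_)]
      · refine Finset.sum_congr rfl fun h hh => ?_
        rw [mem_range] at hh
        rw [if_pos (by omega : j + h < n)]
      · rw [mem_range] at hx
        rw [if_neg (by omega : ¬ j + x < n), mul_zero]
  rw [hquad, hmain, hdel, hsbe]
  ring

private lemma key_abs (n j : ℕ) (hjn : j < n) (A : ℕ → ℝ) (D : ℕ → ℕ → ℝ)
    (W : ℕ → ℝ) (g : ℕ → ℝ)
    (hg : ∀ k, k < n - j → g k = (∑ h ∈ range (k + 1), A h * D (j + k) (k - h))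
      - (∑ h ∈ range (n - (j + k)), A h * D (j + k + h) k)
      + (if k = 0 then W (j + k) else 0)) :
    ∑ k ∈ range (n - j), g k = W j := by
  rw [Finset.sum_congr rfl fun k hk => hg k (mem_range.1 hk)]
  rw [Finset.sum_add_distrib, Finset.sum_sub_distrib]
  have p3 : (∑ k ∈ range (n - j), if k = 0 then W (j + k) else 0) = W j := by
    rw [Finset.sum_ite_eq' (range (n - j)) 0 (fun k => W (j + k)),
      if_pos (mem_range.2 (by omega)), Nat.add_zero]
  have p12 : (∑ k ∈ range (n - j), ∑ h ∈ range (k + 1), A h * D (j + k) (k - h))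
      = ∑ k ∈ range (n - j), ∑ h ∈ range (n - (j + k)), A h * D (j + k + h) k := by
    have t := tri_swap (fun h k => A h * D (j + k + h) k) (n - j)
    have l : (∑ k ∈ range (n - j), ∑ h ∈ range (n - j - k), A h * D (j + k + h) k)
        = ∑ k ∈ range (n - j), ∑ h ∈ range (n - (j + k)), A h * D (j + k + h) k := by
      refine Finset.sum_congr rfl fun k hk => ?_
      rw [mem_range] at hk
      rw [show n - j - k = n - (j + k) from by omega]
    have r : (∑ k ∈ range (n - j), ∑ h ∈ range (k + 1), A h * D (j + (k - h) + h) (k - h))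
        = ∑ k ∈ range (n - j), ∑ h ∈ range (k + 1), A h * D (j + k) (k - h) := by
      refine Finset.sum_congr rfl fun k _ => Finset.sum_congr rfl fun h hh => ?_
      rw [mem_range] at hh
      congr 2
      omega
    rw [← r, ← t, l]
  rw [p3, p12]
  ring

end Aux

/-- a solution of (EQ2) of the single-block generalised Gibbons–Tsarev system
has `∂_j V = 0` for every `j ∈ {2,…,n}` (0-based: every index `j ≥ 1`). -/
theorem stmt7 (n : ℕ) (hn : 2 ≤ n) (U : Set (Fin n → ℝ)) (hU : IsOpen U)
    (V : (Fin n → ℝ) → ℝ) (μ : (Fin n → ℝ) → (Fin n → ℝ))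
    (hV : ContDiffOn ℝ (⊤ : ℕ∞) V U) (hμ : ContDiffOn ℝ (⊤ : ℕ∞) μ U)
    (hEQ2 : ∀ i j : Fin n, ∀ u ∈ U, GT2 μ V i j u = 0) :
    ∀ j : Fin n, 1 ≤ (j : ℕ) → ∀ u ∈ U, pd j V u = 0 := by
  intro j hj1 u hu
  have hjn : (j : ℕ) < n := j.isLt
  have hg : ∀ k, k < n - (j : ℕ) →
      (fun k => if hk : (j : ℕ) + k < n then
        GT2 μ V ⟨k, by omega⟩ ⟨(j : ℕ) + k, hk⟩ u else 0) k
      = (∑ h ∈ Finset.range (k + 1), Af μ u h * Df μ u ((j : ℕ) + k) (k - h))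
        - (∑ h ∈ Finset.range (n - ((j : ℕ) + k)), Af μ u h * Df μ u ((j : ℕ) + k + h) k)
        + (if k = 0 then Wf V u ((j : ℕ) + k) else 0) := by
    intro k hk
    have hk' : (j : ℕ) + k < n := by omega
    simp only [dif_pos hk']
    exact gt2_eval μ V u k ((j : ℕ) + k) hk' (by omega)
  have hkey := key_abs n (j : ℕ) hjn (Af μ u) (Df μ u) (Wf V u) _ hg
  have hzero : (∑ k ∈ Finset.range (n - (j : ℕ)),
      (fun k => if hk : (j : ℕ) + k < n then
        GT2 μ V ⟨k, by omega⟩ ⟨(j : ℕ) + k, hk⟩ u else 0) k) = 0 := by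
    refine Finset.sum_eq_zero fun k hk => ?_
    rw [Finset.mem_range] at hk
    have hk' : (j : ℕ) + k < n := by omega
    simp only [dif_pos hk']
    exact hEQ2 _ _ u hu
  have hW : Wf V u (j : ℕ) = 0 := by rw [← hkey, hzero]
  have : pd j V u = Wf V u (j : ℕ) := by
    unfold Wf
    rw [dif_pos j.isLt]
  rw [this, hW]
end

section
/- Let n ≥ 3, let U ⊆ ℝ^n be open, and let V, μ^1,…,μ^n be smooth functions on U satisfying equations (EQ2) for all i, j ∈ {1,…,n}, with μ^2(u) ≠ 0 for all u ∈ U. Then ∂_j μ^1 = 0 identically on U for every j ∈ {3,…,n}. -/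
open scoped BigOperators

lemma sbc_eq_zero {n : ℕ} {i j k : Fin n} (h : (j : ℕ) + (k : ℕ) ≠ (i : ℕ)) :
    sbc i j k = 0 := if_neg h

lemma sum_sbc_left {n : ℕ} (i h : Fin n) (f : Fin n → ℝ) :
    ∑ k, sbc i h k * f k =
      if (h : ℕ) ≤ (i : ℕ) then
        f ⟨(i : ℕ) - (h : ℕ), Nat.lt_of_le_of_lt (Nat.sub_le _ _) i.isLt⟩ else 0 := by
  unfold sbc
  split_ifs with hle
  · rw [Finset.sum_eq_single (⟨(i : ℕ) - (h : ℕ), Nat.lt_of_le_of_lt (Nat.sub_le _ _) i.isLt⟩ : Fin n)]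
    · rw [if_pos (by simp; omega), one_mul]
    · intro k _ hk
      rw [if_neg, zero_mul]
      intro hc; exact hk (Fin.ext (by simp; omega))
    · intro habs; exact absurd (Finset.mem_univ _) habs
  · apply Finset.sum_eq_zero; intro k _; rw [if_neg (by omega), zero_mul]

lemma sum_sbc_right {n : ℕ} (j h : Fin n) (f : Fin n → ℝ) :
    ∑ k, sbc k j h * f k =
      if H : (j : ℕ) + (h : ℕ) < n then f ⟨(j : ℕ) + (h : ℕ), H⟩ else 0 := by
  unfold sbc
  split_ifs with hlt
  · rw [Finset.sum_eq_single (⟨(j : ℕ) + (h : ℕ), hlt⟩ : Fin n)]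
    · rw [if_pos (by simp), one_mul]
    · intro k _ hk
      rw [if_neg, zero_mul]
      intro hc; exact hk (Fin.ext (by simp; omega))
    · intro habs; exact absurd (Finset.mem_univ _) habs
  · apply Finset.sum_eq_zero; intro k _; rw [if_neg (by omega), zero_mul]


/-- a solution of (EQ2) of the single-block generalised Gibbons–Tsarev system
with `μ^2 ≠ 0` on `U` has `∂_j μ^1 = 0` for every `j ∈ {3,…,n}` (0-based: `j ≥ 2`). -/
theorem stmt8 (n : ℕ) (hn : 3 ≤ n) (U : Set (Fin n → ℝ)) (hU : IsOpen U)
    (V : (Fin n → ℝ) → ℝ) (μ : (Fin n → ℝ) → (Fin n → ℝ))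
    (hV : ContDiffOn ℝ (⊤ : ℕ∞) V U) (hμ : ContDiffOn ℝ (⊤ : ℕ∞) μ U)
    (hμ2 : ∀ u ∈ U, μ u ⟨1, by omega⟩ ≠ 0)
    (hEQ2 : ∀ i j : Fin n, ∀ u ∈ U, GT2 μ V i j u = 0) :
    ∀ j : Fin n, 2 ≤ (j : ℕ) → ∀ u ∈ U,
      pd j (fun v => μ v ⟨0, by omega⟩) u = 0 := by
  have h0n : (0:ℕ) < n := by omega
  have h1n : (1:ℕ) < n := by omega
  have key : ∀ d : ℕ, ∀ j : Fin n, n - (j : ℕ) ≤ d →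
      ∀ m : ℕ, m + 2 ≤ (j : ℕ) → ∀ (hmn : m < n), ∀ u ∈ U,
        pd j (fun v => μ v ⟨m, hmn⟩) u = 0 := by
    intro d
    induction d with
    | zero =>
      intro j hj
      exact absurd hj (by have := j.isLt; omega)
    | succ d ih =>
      intro j hj m
      induction m using Nat.strong_induction_on with
      | _ m ihm =>
        intro hmj hmn u hu
        have hjlt := j.isLt
        have hm1n : m + 1 < n := by omega
        have hsbcIj : ∀ s : Fin n, sbc (⟨m + 1, hm1n⟩ : Fin n) j s = 0 := by
          intro s
          apply sbc_eq_zero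
          show (j : ℕ) + (s : ℕ) ≠ m + 1
          omega
        have hB : (∑ h, ∑ s, ∑ k, ∑ t, μ u h * sbc (⟨m + 1, hm1n⟩ : Fin n) j s
            * sbc s h k * sbe t * pd t (fun v => μ v k) u) = 0 := by
          refine Finset.sum_eq_zero fun h _ => Finset.sum_eq_zero fun s _ =>
            Finset.sum_eq_zero fun k _ => Finset.sum_eq_zero fun t _ => ?_
          rw [hsbcIj s, mul_zero, zero_mul, zero_mul, zero_mul]
        have hsbeI : sbe (⟨m + 1, hm1n⟩ : Fin n) = 0 := by
          unfold sbe
          exact if_neg (Nat.succ_ne_zero m)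
        have hIj : (if (⟨m + 1, hm1n⟩ : Fin n) = j then (1:ℝ) else 0) = 0 := by
          rw [if_neg]
          intro hc
          have hc' : m + 1 = (j : ℕ) := congrArg Fin.val hc
          omega
        have inner : ∀ h : Fin n,
            (∑ k, μ u h * (sbc (⟨m + 1, hm1n⟩ : Fin n) h k * pd j (fun v => μ v k) u
              + sbc (⟨m + 1, hm1n⟩ : Fin n) j k * pd h (fun v => μ v k) u
              - sbc k j h * pd k (fun v => μ v (⟨m + 1, hm1n⟩ : Fin n)) u))
            = μ u h * ((if (h : ℕ) ≤ m + 1 then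
                  pd j (fun v => μ v ⟨m + 1 - (h : ℕ),
                    Nat.lt_of_le_of_lt (Nat.sub_le _ _) hm1n⟩) u else 0)
               - (if H : (j : ℕ) + (h : ℕ) < n then
                    pd ⟨(j : ℕ) + (h : ℕ), H⟩ (fun v => μ v (⟨m + 1, hm1n⟩ : Fin n)) u else 0)) := by
          intro h
          rw [← Finset.mul_sum]
          congr 1
          simp only [hsbcIj, zero_mul, add_zero]
          rw [Finset.sum_sub_distrib, sum_sbc_left, sum_sbc_right]
        have hL : (∑ h : Fin n, μ u h * (if (h : ℕ) ≤ m + 1 then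
              pd j (fun v => μ v ⟨m + 1 - (h : ℕ),
                Nat.lt_of_le_of_lt (Nat.sub_le _ _) hm1n⟩) u else 0))
            = μ u ⟨0, h0n⟩ * pd j (fun v => μ v (⟨m + 1, hm1n⟩ : Fin n)) u
              + μ u ⟨1, h1n⟩ * pd j (fun v => μ v ⟨m, hmn⟩) u := by
          have point : ∀ h : Fin n, μ u h * (if (h : ℕ) ≤ m + 1 then
              pd j (fun v => μ v ⟨m + 1 - (h : ℕ),
                Nat.lt_of_le_of_lt (Nat.sub_le _ _) hm1n⟩) u else 0)
            = (if h = ⟨0, h0n⟩ then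
                μ u ⟨0, h0n⟩ * pd j (fun v => μ v (⟨m + 1, hm1n⟩ : Fin n)) u else 0)
              + (if h = ⟨1, h1n⟩ then
                μ u ⟨1, h1n⟩ * pd j (fun v => μ v ⟨m, hmn⟩) u else 0) := by
            intro h
            by_cases he0 : h = ⟨0, h0n⟩
            · subst he0
              rw [if_pos rfl, if_neg (show (⟨0, h0n⟩ : Fin n) ≠ ⟨1, h1n⟩ by
                  simp [Fin.ext_iff]), add_zero,
                if_pos (show ((⟨0, h0n⟩ : Fin n) : ℕ) ≤ m + 1 from Nat.zero_le _)]
              rfl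
            · by_cases he1 : h = ⟨1, h1n⟩
              · subst he1
                rw [if_neg he0, if_pos rfl, zero_add,
                  if_pos (show ((⟨1, h1n⟩ : Fin n) : ℕ) ≤ m + 1 from
                    Nat.succ_le_succ (Nat.zero_le m))]
                rfl
              · have hne0 : (h : ℕ) ≠ 0 := fun hv => he0 (Fin.ext hv)
                have hne1 : (h : ℕ) ≠ 1 := fun hv => he1 (Fin.ext hv)
                rw [if_neg he0, if_neg he1, add_zero]
                split_ifs with hle
                · rw [ihm (m + 1 - (h : ℕ)) (by omega) (by omega)
                    (Nat.lt_of_le_of_lt (Nat.sub_le _ _) hm1n) u hu, mul_zero]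
                · rw [mul_zero]
          rw [Finset.sum_congr rfl fun h _ => point h, Finset.sum_add_distrib,
            Finset.sum_ite_eq' Finset.univ, Finset.sum_ite_eq' Finset.univ,
            if_pos (Finset.mem_univ _), if_pos (Finset.mem_univ _)]
        have hR : (∑ h : Fin n, μ u h * (if H : (j : ℕ) + (h : ℕ) < n then
              pd ⟨(j : ℕ) + (h : ℕ), H⟩ (fun v => μ v (⟨m + 1, hm1n⟩ : Fin n)) u else 0))
            = μ u ⟨0, h0n⟩ * pd j (fun v => μ v (⟨m + 1, hm1n⟩ : Fin n)) u := by
          have point : ∀ h : Fin n, μ u h * (if H : (j : ℕ) + (h : ℕ) < n then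
              pd ⟨(j : ℕ) + (h : ℕ), H⟩ (fun v => μ v (⟨m + 1, hm1n⟩ : Fin n)) u else 0)
            = (if h = ⟨0, h0n⟩ then
                μ u ⟨0, h0n⟩ * pd j (fun v => μ v (⟨m + 1, hm1n⟩ : Fin n)) u else 0) := by
            intro h
            by_cases he0 : h = ⟨0, h0n⟩
            · subst he0
              rw [if_pos rfl, dif_pos (show (j : ℕ) + ((⟨0, h0n⟩ : Fin n) : ℕ) < n from by
                show (j : ℕ) + 0 < n
                omega)]
              rfl
            · have hne0 : (h : ℕ) ≠ 0 := fun hv => he0 (Fin.ext hv)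
              rw [if_neg he0]
              split_ifs with hlt
              · rw [ih ⟨(j : ℕ) + (h : ℕ), hlt⟩
                  (show n - ((⟨(j : ℕ) + (h : ℕ), hlt⟩ : Fin n) : ℕ) ≤ d from by
                    show n - ((j : ℕ) + (h : ℕ)) ≤ d; omega)
                  (m + 1)
                  (show m + 1 + 2 ≤ ((⟨(j : ℕ) + (h : ℕ), hlt⟩ : Fin n) : ℕ) from by
                    show m + 1 + 2 ≤ (j : ℕ) + (h : ℕ); omega)
                  hm1n u hu, mul_zero]
              · rw [mul_zero]
          rw [Finset.sum_congr rfl fun h _ => point h,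
            Finset.sum_ite_eq' Finset.univ, if_pos (Finset.mem_univ _)]
        have main : GT2 μ V (⟨m + 1, hm1n⟩ : Fin n) j u
            = μ u ⟨1, h1n⟩ * pd j (fun v => μ v ⟨m, hmn⟩) u := by
          unfold GT2
          rw [hB, hsbeI, hIj, zero_mul, zero_mul, sub_zero, add_zero, sub_zero]
          calc (∑ h, ∑ k, μ u h * (sbc (⟨m + 1, hm1n⟩ : Fin n) h k * pd j (fun v => μ v k) u
                + sbc (⟨m + 1, hm1n⟩ : Fin n) j k * pd h (fun v => μ v k) u
                - sbc k j h * pd k (fun v => μ v (⟨m + 1, hm1n⟩ : Fin n)) u))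
              = ∑ h : Fin n, (μ u h * (if (h : ℕ) ≤ m + 1 then
                  pd j (fun v => μ v ⟨m + 1 - (h : ℕ),
                    Nat.lt_of_le_of_lt (Nat.sub_le _ _) hm1n⟩) u else 0)
                - μ u h * (if H : (j : ℕ) + (h : ℕ) < n then
                    pd ⟨(j : ℕ) + (h : ℕ), H⟩ (fun v => μ v (⟨m + 1, hm1n⟩ : Fin n)) u else 0)) :=
                Finset.sum_congr rfl fun h _ => by rw [inner h, mul_sub]
            _ = (∑ h : Fin n, μ u h * (if (h : ℕ) ≤ m + 1 then
                  pd j (fun v => μ v ⟨m + 1 - (h : ℕ),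
                    Nat.lt_of_le_of_lt (Nat.sub_le _ _) hm1n⟩) u else 0))
                - (∑ h : Fin n, μ u h * (if H : (j : ℕ) + (h : ℕ) < n then
                    pd ⟨(j : ℕ) + (h : ℕ), H⟩ (fun v => μ v (⟨m + 1, hm1n⟩ : Fin n)) u else 0)) :=
                Finset.sum_sub_distrib _ _
            _ = μ u ⟨1, h1n⟩ * pd j (fun v => μ v ⟨m, hmn⟩) u := by rw [hL, hR]; ring
        have hfin := hEQ2 (⟨m + 1, hm1n⟩ : Fin n) j u hu
        rw [main] at hfin
        rcases mul_eq_zero.mp hfin with hc | hc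
        · exact absurd hc (hμ2 u hu)
        · exact hc
  intro j hj u hu
  exact key n j (by omega) 0 (by omega) (by omega) u hu
end

section
/- Let n ≥ 2, let U ⊆ ℝ^n be open, and let V, μ^1,…,μ^n be smooth functions on U satisfying equations (EQ2) for all i, j ∈ {1,…,n}, with μ^2(u) ≠ 0 for all u ∈ U. Then the identity n·μ^2·∂_2 μ^1 = (n−1)·∂_1 V holds at every point of U. -/
open scoped BigOperators

namespace Stmt9Aux

lemma sum_ite_val {n : ℕ} (v : ℕ) (f : Fin n → ℝ) :
    (∑ s : Fin n, if (s : ℕ) = v then f s else 0) = if h : v < n then f ⟨v, h⟩ else 0 := by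
  split
  · rename_i h
    rw [Finset.sum_eq_single (⟨v, h⟩ : Fin n)]
    · simp
    · intro b _ hb; rw [if_neg]; intro hv; exact hb (Fin.ext hv)
    · intro hm; exact absurd (Finset.mem_univ _) hm
  · rename_i h
    apply Finset.sum_eq_zero
    intro s _; rw [if_neg]; have := s.isLt; omega


lemma sum_one {n : ℕ} (f : Fin n → ℝ) (v : Fin n) (hf : ∀ h, h ≠ v → f h = 0) :
    ∑ h, f h = f v :=
  Finset.sum_eq_single v (fun b _ hb => hf b hb) (fun h => absurd (Finset.mem_univ v) h)

lemma sum_two {n : ℕ} (a b : Fin n) (hab : a ≠ b) (f : Fin n → ℝ)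
    (hf : ∀ h, h ≠ a → h ≠ b → f h = 0) : ∑ h, f h = f a + f b := by
  rw [← Finset.sum_pair hab]
  symm
  apply Finset.sum_subset (Finset.subset_univ _)
  intro x _ hx
  simp only [Finset.mem_insert, Finset.mem_singleton, not_or] at hx
  exact hf x hx.1 hx.2

-- reduction for 1 ≤ i < j
lemma GT2_lt {n : ℕ} (μ : (Fin n → ℝ) → (Fin n → ℝ)) (V : (Fin n → ℝ) → ℝ)
    (i j : Fin n) (u : Fin n → ℝ) (hij : (i : ℕ) < (j : ℕ)) (hi0 : (i : ℕ) ≠ 0) :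
    GT2 μ V i j u =
      (∑ h : Fin n, ∑ k : Fin n, if (h : ℕ) + (k : ℕ) = (i : ℕ) then μ u h * pd j (fun v => μ v k) u else 0)
      - (∑ h : Fin n, ∑ k : Fin n, if (j : ℕ) + (h : ℕ) = (k : ℕ) then μ u h * pd k (fun v => μ v i) u else 0) := by
  unfold GT2
  have hB : ∀ h k : Fin n, sbc i j k = 0 := by
    intro h k; unfold sbc; rw [if_neg]; omega
  have h4 : (∑ h, ∑ s, ∑ k, ∑ t, μ u h * sbc i j s * sbc s h k * sbe t * pd t (fun v => μ v k) u) = 0 := by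
    apply Finset.sum_eq_zero; intro h _
    apply Finset.sum_eq_zero; intro s _
    apply Finset.sum_eq_zero; intro k _
    apply Finset.sum_eq_zero; intro t _
    have : sbc i j s = 0 := by unfold sbc; rw [if_neg]; omega
    rw [this]; ring
  have h5 : sbe i = 0 := by unfold sbe; rw [if_neg hi0]
  have h6 : (if i = j then (1:ℝ) else 0) = 0 := by
    rw [if_neg]; intro h; rw [h] at hij; omega
  rw [h4, h5, h6]
  have h1 : (∑ h, ∑ k, μ u h * (sbc i h k * pd j (fun v => μ v k) u
                      + sbc i j k * pd h (fun v => μ v k) u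
                      - sbc k j h * pd k (fun v => μ v i) u))
      = (∑ h : Fin n, ∑ k : Fin n, ((if (h : ℕ) + (k : ℕ) = (i : ℕ) then μ u h * pd j (fun v => μ v k) u else 0)
          - (if (j : ℕ) + (h : ℕ) = (k : ℕ) then μ u h * pd k (fun v => μ v i) u else 0))) := by
    apply Finset.sum_congr rfl; intro h _
    apply Finset.sum_congr rfl; intro k _
    rw [hB h k]
    unfold sbc
    split_ifs <;> ring
  rw [h1]
  simp [Finset.sum_sub_distrib]

lemma sum_collapse0 {n : ℕ} (hn : 0 < n) (f : Fin n → ℝ) :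
    (∑ s : Fin n, if (s : ℕ) = 0 then f s else 0) = f ⟨0, hn⟩ := by
  rw [sum_ite_val, dif_pos hn]

lemma GT2_diag {n : ℕ} (hn : 0 < n) (μ : (Fin n → ℝ) → (Fin n → ℝ)) (V : (Fin n → ℝ) → ℝ)
    (i : Fin n) (u : Fin n → ℝ) :
    GT2 μ V i i u =
      (∑ h : Fin n, ∑ k : Fin n, if (h : ℕ) + (k : ℕ) = (i : ℕ)
          then μ u h * pd i (fun v => μ v k) u else 0)
      + (∑ h : Fin n, μ u h * pd h (fun v => μ v ⟨0, hn⟩) u)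
      - (∑ h : Fin n, ∑ k : Fin n, if (i : ℕ) + (h : ℕ) = (k : ℕ)
          then μ u h * pd k (fun v => μ v i) u else 0)
      - μ u ⟨0, hn⟩ * pd (⟨0, hn⟩ : Fin n) (fun v => μ v ⟨0, hn⟩) u
      + (if (i : ℕ) = 0 then pd i V u else 0)
      - pd (⟨0, hn⟩ : Fin n) V u := by
  unfold GT2
  have h1 : (∑ h : Fin n, ∑ k : Fin n, μ u h * (sbc i h k * pd i (fun v => μ v k) u
                      + sbc i i k * pd h (fun v => μ v k) u
                      - sbc k i h * pd k (fun v => μ v i) u))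
      = (∑ h : Fin n, ∑ k : Fin n,
          ((if (h : ℕ) + (k : ℕ) = (i : ℕ) then μ u h * pd i (fun v => μ v k) u else 0)
           + (if (k : ℕ) = 0 then μ u h * pd h (fun v => μ v k) u else 0)
           - (if (i : ℕ) + (h : ℕ) = (k : ℕ) then μ u h * pd k (fun v => μ v i) u else 0))) := by
    apply Finset.sum_congr rfl; intro h _
    apply Finset.sum_congr rfl; intro k _
    unfold sbc
    split_ifs <;> (first | ring1 | (exfalso; omega))
  have h2 : (∑ h : Fin n, ∑ k : Fin n,
        (if (k : ℕ) = 0 then μ u h * pd h (fun v => μ v k) u else 0))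
      = ∑ h : Fin n, μ u h * pd h (fun v => μ v ⟨0, hn⟩) u := by
    apply Finset.sum_congr rfl; intro h _
    exact sum_collapse0 hn _
  have h4 : (∑ h : Fin n, ∑ s : Fin n, ∑ k : Fin n, ∑ t : Fin n,
        μ u h * sbc i i s * sbc s h k * sbe t * pd t (fun v => μ v k) u)
      = μ u ⟨0, hn⟩ * pd (⟨0, hn⟩ : Fin n) (fun v => μ v ⟨0, hn⟩) u := by
    have hpt : ∀ h s k t : Fin n,
        μ u h * sbc i i s * sbc s h k * sbe t * pd t (fun v => μ v k) u
        = (if (h : ℕ) = 0 then (if (s : ℕ) = 0 then (if (k : ℕ) = 0 then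
            (if (t : ℕ) = 0 then μ u h * pd t (fun v => μ v k) u else 0) else 0) else 0) else 0) := by
      intro h s k t
      unfold sbc sbe
      split_ifs <;> (first | ring1 | (exfalso; omega))
    simp only [hpt]
    simp only [Finset.sum_ite_irrel, Finset.sum_const_zero, sum_collapse0 hn]
  have h5 : sbe i * pd i V u = (if (i : ℕ) = 0 then pd i V u else 0) := by
    unfold sbe; split_ifs <;> ring
  have h6 : (if i = i then (1:ℝ) else 0) * (∑ t : Fin n, sbe t * pd t V u)
      = pd (⟨0, hn⟩ : Fin n) V u := by
    rw [if_pos rfl, one_mul]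
    have : ∀ t : Fin n, sbe t * pd t V u = (if (t : ℕ) = 0 then pd t V u else 0) := by
      intro t; unfold sbe; split_ifs <;> ring
    simp only [this]
    exact sum_collapse0 hn _
  rw [h1, h4, h5, h6]
  simp only [Finset.sum_add_distrib, Finset.sum_sub_distrib, h2]

lemma swap_sum {n : ℕ} (m : Fin n → ℝ) (D : Fin n → Fin n → ℝ) :
    (∑ i : Fin n, ∑ h : Fin n, ∑ k : Fin n,
        if (h : ℕ) + (k : ℕ) = (i : ℕ) then m h * D i k else 0)
    = (∑ i : Fin n, ∑ h : Fin n, ∑ k : Fin n,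
        if (i : ℕ) + (h : ℕ) = (k : ℕ) then m h * D k i else 0) := by
  have step1 : (∑ i : Fin n, ∑ h : Fin n, ∑ k : Fin n,
      if (i : ℕ) + (h : ℕ) = (k : ℕ) then m h * D k i else 0)
      = ∑ i : Fin n, ∑ k : Fin n, ∑ h : Fin n,
        if (i : ℕ) + (h : ℕ) = (k : ℕ) then m h * D k i else 0 :=
    Finset.sum_congr rfl (fun i _ => Finset.sum_comm)
  have step2 : (∑ i : Fin n, ∑ k : Fin n, ∑ h : Fin n,
      if (i : ℕ) + (h : ℕ) = (k : ℕ) then m h * D k i else 0)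
      = ∑ k : Fin n, ∑ i : Fin n, ∑ h : Fin n,
        if (i : ℕ) + (h : ℕ) = (k : ℕ) then m h * D k i else 0 := Finset.sum_comm
  have step3 : (∑ k : Fin n, ∑ i : Fin n, ∑ h : Fin n,
      if (i : ℕ) + (h : ℕ) = (k : ℕ) then m h * D k i else 0)
      = ∑ k : Fin n, ∑ h : Fin n, ∑ i : Fin n,
        if (i : ℕ) + (h : ℕ) = (k : ℕ) then m h * D k i else 0 :=
    Finset.sum_congr rfl (fun k _ => Finset.sum_comm)
  rw [step1, step2, step3]
  apply Finset.sum_congr rfl; intro k _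
  apply Finset.sum_congr rfl; intro h _
  apply Finset.sum_congr rfl; intro i _
  exact if_congr (by omega) rfl rfl

lemma cascade {n : ℕ} (hn : 2 ≤ n) (U : Set (Fin n → ℝ))
    (V : (Fin n → ℝ) → ℝ) (μ : (Fin n → ℝ) → (Fin n → ℝ))
    (u : Fin n → ℝ) (hu : u ∈ U)
    (hμ2 : μ u ⟨1, hn⟩ ≠ 0)
    (hEQ2 : ∀ i j : Fin n, ∀ w ∈ U, GT2 μ V i j w = 0) :
    ∀ N : ℕ, ∀ j k : Fin n, (n - (j : ℕ)) * n + (k : ℕ) ≤ N →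
      (k : ℕ) + 2 ≤ (j : ℕ) → pd j (fun v => μ v k) u = 0 := by
  have h0n : 0 < n := by omega
  intro N
  induction N with
  | zero =>
    intro j k hm hk
    exfalso
    have hj : (j : ℕ) < n := j.isLt
    have h1 : 1 ≤ n - (j : ℕ) := by omega
    have h2 : 1 * n ≤ (n - (j : ℕ)) * n := Nat.mul_le_mul_right n h1
    omega
  | succ N ih =>
    intro j k hm hk
    have hkn : (k : ℕ) + 1 < n := by have := j.isLt; omega
    set i : Fin n := ⟨(k : ℕ) + 1, hkn⟩ with hidef
    have hival : (i : ℕ) = (k : ℕ) + 1 := rfl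
    have hEq := hEQ2 i j u hu
    rw [GT2_lt μ V i j u (by omega) (by omega)] at hEq
    set f0 : Fin n := ⟨0, h0n⟩ with hf0
    set f1 : Fin n := ⟨1, by omega⟩ with hf1
    -- reduce the first double sum
    have hA : (∑ h : Fin n, ∑ k' : Fin n,
        if (h : ℕ) + (k' : ℕ) = (i : ℕ) then μ u h * pd j (fun v => μ v k') u else 0)
        = ∑ h : Fin n, (if h = f0 then μ u f0 * pd j (fun v => μ v i) u
            else if h = f1 then μ u f1 * pd j (fun v => μ v k) u else 0) := by
      apply Finset.sum_congr rfl; intro h _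
      by_cases h0 : h = f0
      · subst h0
        rw [if_pos rfl]
        have hc : ∀ k' : Fin n,
            (if (f0 : ℕ) + (k' : ℕ) = (i : ℕ) then μ u f0 * pd j (fun v => μ v k') u else 0)
            = (if k' = i then μ u f0 * pd j (fun v => μ v k') u else 0) := by
          intro k'
          exact if_congr (by rw [Fin.ext_iff]; simp [hf0, hidef]) rfl rfl
        simp only [hc]
        rw [Finset.sum_ite_eq' Finset.univ i
          (fun k' => μ u f0 * pd j (fun v => μ v k') u), if_pos (Finset.mem_univ i)]
      · rw [if_neg h0]
        by_cases h1 : h = f1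
        · subst h1
          rw [if_pos rfl]
          have hkk : (k : Fin n) = k := rfl
          have hc : ∀ k' : Fin n,
              (if (f1 : ℕ) + (k' : ℕ) = (i : ℕ) then μ u f1 * pd j (fun v => μ v k') u else 0)
              = (if k' = k then μ u f1 * pd j (fun v => μ v k') u else 0) := by
            intro k'
            exact if_congr (by rw [Fin.ext_iff]; simp [hf1, hidef]; omega) rfl rfl
          simp only [hc]
          rw [Finset.sum_ite_eq' Finset.univ k
            (fun k' => μ u f1 * pd j (fun v => μ v k') u), if_pos (Finset.mem_univ k)]
        · rw [if_neg h1]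
          apply Finset.sum_eq_zero; intro k' _
          split_ifs with hc
          · -- h ≥ 2, so k' ≤ k-1 and ih applies
            have hh2 : 2 ≤ (h : ℕ) := by
              rcases Nat.lt_or_ge (h : ℕ) 2 with hlt | hge
              · exfalso
                interval_cases hh : (h : ℕ)
                · exact h0 (Fin.ext (by simp [hf0, hh]))
                · exact h1 (Fin.ext (by simp [hf1, hh]))
              · exact hge
            have hk' : (k' : ℕ) + 1 ≤ (k : ℕ) := by omega
            have := ih j k' (by omega) (by omega)
            rw [this, mul_zero]
          · rfl
    -- reduce the second double sum
    have hC : (∑ h : Fin n, ∑ k' : Fin n,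
        if (j : ℕ) + (h : ℕ) = (k' : ℕ) then μ u h * pd k' (fun v => μ v i) u else 0)
        = ∑ h : Fin n, (if h = f0 then μ u f0 * pd j (fun v => μ v i) u else 0) := by
      apply Finset.sum_congr rfl; intro h _
      by_cases h0 : h = f0
      · subst h0
        rw [if_pos rfl]
        have hc : ∀ k' : Fin n,
            (if (j : ℕ) + (f0 : ℕ) = (k' : ℕ) then μ u f0 * pd k' (fun v => μ v i) u else 0)
            = (if k' = j then μ u f0 * pd k' (fun v => μ v i) u else 0) := by
          intro k'
          exact if_congr (by rw [Fin.ext_iff]; simp [hf0]; omega) rfl rfl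
        simp only [hc]
        rw [Finset.sum_ite_eq' Finset.univ j
          (fun k' => μ u f0 * pd k' (fun v => μ v i) u), if_pos (Finset.mem_univ j)]
      · rw [if_neg h0]
        apply Finset.sum_eq_zero; intro k' _
        split_ifs with hc
        · have hh1 : 1 ≤ (h : ℕ) := by
            rcases Nat.eq_zero_or_pos (h : ℕ) with h' | h'
            · exact absurd (Fin.ext (by simp [hf0, h'])) h0
            · exact h'
          have hjk' : (j : ℕ) + 1 ≤ (k' : ℕ) := by omega
          -- measure decreases: (n - k')*n + (i) ≤ N
          have hmul : (n - (k' : ℕ)) * n + n ≤ (n - (j : ℕ)) * n := by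
            have hle : (n - (k' : ℕ)) + 1 ≤ n - (j : ℕ) := by
              have := k'.isLt; omega
            calc (n - (k' : ℕ)) * n + n = ((n - (k' : ℕ)) + 1) * n := by ring
              _ ≤ (n - (j : ℕ)) * n := Nat.mul_le_mul_right n hle
          have := ih k' i (by omega) (by omega)
          rw [this, mul_zero]
        · rfl
    rw [hA, hC] at hEq
    have h01 : f0 ≠ f1 := by simp [hf0, hf1, Fin.ext_iff]
    rw [sum_two f0 f1 h01 _ (fun h hh0 hh1 => by rw [if_neg hh0, if_neg hh1])] at hEq
    rw [sum_one _ f0 (fun h hh0 => by rw [if_neg hh0])] at hEq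
    rw [if_pos rfl, if_pos rfl, if_neg h01.symm, if_pos rfl] at hEq
    have : μ u f1 * pd j (fun v => μ v k) u = 0 := by linarith
    rcases mul_eq_zero.mp this with h' | h'
    · exact absurd h' hμ2
    · exact h'


end Stmt9Aux

/-- a solution of (EQ2) of the single-block generalised Gibbons–Tsarev system
with `μ^2 ≠ 0` on `U` satisfies `n·μ^2·∂_2 μ^1 = (n−1)·∂_1 V` on `U`. -/
theorem stmt9 (n : ℕ) (hn : 2 ≤ n) (U : Set (Fin n → ℝ)) (hU : IsOpen U)
    (V : (Fin n → ℝ) → ℝ) (μ : (Fin n → ℝ) → (Fin n → ℝ))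
    (hV : ContDiffOn ℝ (⊤ : ℕ∞) V U) (hμ : ContDiffOn ℝ (⊤ : ℕ∞) μ U)
    (hμ2 : ∀ u ∈ U, μ u ⟨1, by omega⟩ ≠ 0)
    (hEQ2 : ∀ i j : Fin n, ∀ u ∈ U, GT2 μ V i j u = 0) :
    ∀ u ∈ U,
      (n : ℝ) * μ u ⟨1, by omega⟩ * pd (⟨1, by omega⟩ : Fin n)
          (fun v => μ v ⟨0, by omega⟩) u
      = ((n : ℝ) - 1) * pd (⟨0, by omega⟩ : Fin n) V u := by
  intro u hu
  have h0n : 0 < n := by omega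
  set f0 : Fin n := ⟨0, h0n⟩ with hf0
  set f1 : Fin n := ⟨1, by omega⟩ with hf1
  -- trace of the diagonal equations
  have htr : (0 : ℝ) = ∑ i : Fin n, GT2 μ V i i u := by
    symm; apply Finset.sum_eq_zero; intro i _; exact hEQ2 i i u hu
  have hdiag : ∀ i : Fin n, GT2 μ V i i u =
      (∑ h : Fin n, ∑ k : Fin n, if (h : ℕ) + (k : ℕ) = (i : ℕ)
          then μ u h * pd i (fun v => μ v k) u else 0)
      + (∑ h : Fin n, μ u h * pd h (fun v => μ v f0) u)
      - (∑ h : Fin n, ∑ k : Fin n, if (i : ℕ) + (h : ℕ) = (k : ℕ)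
          then μ u h * pd k (fun v => μ v i) u else 0)
      - μ u f0 * pd f0 (fun v => μ v f0) u
      + (if (i : ℕ) = 0 then pd i V u else 0)
      - pd f0 V u := fun i => Stmt9Aux.GT2_diag h0n μ V i u
  rw [Finset.sum_congr rfl (fun i _ => hdiag i)] at htr
  simp only [Finset.sum_add_distrib, Finset.sum_sub_distrib] at htr
  rw [Stmt9Aux.swap_sum (fun h => μ u h) (fun a b => pd a (fun v => μ v b) u)] at htr
  rw [Stmt9Aux.sum_collapse0 h0n (fun i => pd i V u)] at htr
  simp only [Finset.sum_const, Finset.card_univ, Fintype.card_fin, nsmul_eq_mul] at htr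
  -- htr : 0 = S - S + n*B - n*c0 + W0 - n*W0  (after cancellation)
  -- reduce B using Stmt9Aux.cascade
  have hcas := Stmt9Aux.cascade hn U V μ u hu (hμ2 u hu) hEQ2
  have hB : (∑ h : Fin n, μ u h * pd h (fun v => μ v f0) u)
      = μ u f0 * pd f0 (fun v => μ v f0) u + μ u f1 * pd f1 (fun v => μ v f0) u := by
    have h01 : f0 ≠ f1 := by simp [hf0, hf1, Fin.ext_iff]
    rw [Stmt9Aux.sum_two f0 f1 h01 (fun h => μ u h * pd h (fun v => μ v f0) u)]
    intro h hh0 hh1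
    have hh2 : 2 ≤ (h : ℕ) := by
      rcases Nat.lt_or_ge (h : ℕ) 2 with hlt | hge
      · exfalso
        interval_cases hh : (h : ℕ)
        · exact hh0 (Fin.ext (by simp [hf0, hh]))
        · exact hh1 (Fin.ext (by simp [hf1, hh]))
      · exact hge
    have : pd h (fun v => μ v f0) u = 0 := by
      apply hcas ((n - (h : ℕ)) * n + (f0 : ℕ)) h f0 le_rfl
      simp [hf0]; omega
    rw [this, mul_zero]
  rw [hB] at htr
  have hgoal : (n : ℝ) * (μ u f1 * pd f1 (fun v => μ v f0) u)
      = ((n : ℝ) - 1) * pd f0 V u := by linarith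
  calc (n : ℝ) * μ u ⟨1, by omega⟩ * pd (⟨1, by omega⟩ : Fin n) (fun v => μ v ⟨0, by omega⟩) u
      = (n : ℝ) * (μ u f1 * pd f1 (fun v => μ v f0) u) := by rw [hf1, hf0]; ring
    _ = ((n : ℝ) - 1) * pd f0 V u := hgoal
    _ = ((n : ℝ) - 1) * pd (⟨0, by omega⟩ : Fin n) V u := by rw [hf0]
end

section
/- In the multi-block generalised Gibbons–Tsarev setting, let U ⊆ ℝ^n be open and let V and the μ^{i(α)} be smooth functions on U satisfying equations (EQ1blocks) and (EQ2blocks), with μ^{1(α)}(u) ≠ μ^{1(β)}(u) for all u ∈ U and all distinct α, β, and μ^{2(α)}(u) ≠ 0 for all u ∈ U whenever m_α ≥ 2. Then for every α with m_α ≥ 2 and every j ∈ {2,…,m_α}, one has ∂_{j(α)} V = 0 identically on U. -/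
open scoped BigOperators

section Block

variable {r : ℕ} {m : Fin r → ℕ}

/-- Multi-block structure constants
`c^{i(α)}_{j(β)k(γ)} = δ^α_β δ^α_γ δ^i_{j+k−1}` (0-based: `1` iff same block and `j+k=i`). -/
noncomputable def bc (i j k : (α : Fin r) × Fin (m α)) : ℝ :=
  if i.1 = j.1 ∧ i.1 = k.1 ∧ (j.2 : ℕ) + (k.2 : ℕ) = (i.2 : ℕ) then 1 else 0

/-- Components of the unit: `e^{i(α)} = δ^i_1` (0-based: `1` iff `i = 0`). -/
noncomputable def bec (i : (α : Fin r) × Fin (m α)) : ℝ :=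
  if (i.2 : ℕ) = 0 then 1 else 0

/-- Left-hand side of (EQ1blocks) of the multi-block generalised Gibbons–Tsarev system. -/
noncomputable def GT1b (μ : (((α : Fin r) × Fin (m α)) → ℝ) → ((α : Fin r) × Fin (m α)) → ℝ)
    (V : (((α : Fin r) × Fin (m α)) → ℝ) → ℝ)
    (i j : (α : Fin r) × Fin (m α)) (u : ((α : Fin r) × Fin (m α)) → ℝ) : ℝ :=
  (∑ t, ∑ s, μ u t * (bc s t i * pd s (fun v => pd j V v) u
                      - bc s t j * pd s (fun v => pd i V v) u))
  - (∑ t, ∑ s, (bc t j s * pd i (fun v => μ v s) u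
                - bc t i s * pd j (fun v => μ v s) u) * pd t V u)

/-- Left-hand side of (EQ2blocks) of the multi-block generalised Gibbons–Tsarev system. -/
noncomputable def GT2b (μ : (((α : Fin r) × Fin (m α)) → ℝ) → ((α : Fin r) × Fin (m α)) → ℝ)
    (V : (((α : Fin r) × Fin (m α)) → ℝ) → ℝ)
    (i j : (α : Fin r) × Fin (m α)) (u : ((α : Fin r) × Fin (m α)) → ℝ) : ℝ :=
  (∑ h, ∑ k, μ u h * (bc i h k * pd j (fun v => μ v k) u
                      + bc i j k * pd h (fun v => μ v k) u
                      - bc k j h * pd k (fun v => μ v i) u))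
  - (∑ h, ∑ s, ∑ k, μ u h * bc i j s * bc s h k * (∑ t, bec t * pd t (fun v => μ v k) u))
  + bec i * pd j V u
  - (if i = j then 1 else 0) * (∑ t, bec t * pd t V u)

end Block

section Aux

variable {r : ℕ} {m : Fin r → ℕ}

/-- restriction of a function on the sigma type to block `α`, as a function of ℕ -/
noncomputable def blk (α : Fin r) (f : ((β : Fin r) × Fin (m β)) → ℝ) (t : ℕ) : ℝ :=
  if h : t < m α then f ⟨α, ⟨t, h⟩⟩ else 0

lemma bc_zero_of_lt (i j k : (α : Fin r) × Fin (m α)) (h : (i.2 : ℕ) < (j.2 : ℕ)) :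
    bc i j k = 0 := by
  rw [bc, if_neg]; rintro ⟨-, -, h3⟩; omega

lemma sumH1 (α : Fin r) (i2 : Fin (m α)) (w g : ((β : Fin r) × Fin (m β)) → ℝ) :
    (∑ h : (β : Fin r) × Fin (m β), ∑ k : (β : Fin r) × Fin (m β),
        w h * (bc ⟨α, i2⟩ h k * g k))
      = ∑ t ∈ Finset.range ((i2 : ℕ) + 1), blk α w t * blk α g ((i2 : ℕ) - t) := by
  have hstep : ∀ h : (β : Fin r) × Fin (m β),
      (∑ k : (β : Fin r) × Fin (m β), w h * (bc ⟨α, i2⟩ h k * g k))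
        = if h.1 = α ∧ (h.2 : ℕ) ≤ (i2 : ℕ) then
            w h * blk α g ((i2 : ℕ) - (h.2 : ℕ)) else 0 := by
    intro h
    by_cases hc : h.1 = α ∧ (h.2 : ℕ) ≤ (i2 : ℕ)
    · rw [if_pos hc]
      obtain ⟨hc1, hc2⟩ := hc
      have hlt : (i2 : ℕ) - (h.2 : ℕ) < m α := lt_of_le_of_lt (Nat.sub_le _ _) i2.isLt
      rw [Fintype.sum_eq_single (⟨α, ⟨(i2 : ℕ) - (h.2 : ℕ), hlt⟩⟩ :
          (β : Fin r) × Fin (m β))]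
      · have hbc : bc ⟨α, i2⟩ h ⟨α, ⟨(i2 : ℕ) - (h.2 : ℕ), hlt⟩⟩ = 1 := by
          rw [bc, if_pos]; exact ⟨hc1.symm, rfl, by simp; omega⟩
        rw [hbc, blk, dif_pos hlt]; ring
      · intro k hk
        have hbc : bc ⟨α, i2⟩ h k = 0 := by
          rw [bc, if_neg]
          rintro ⟨e1, e2, e3⟩
          apply hk
          rcases k with ⟨γ, k2⟩
          simp only at e2 e3
          subst e2
          have hv : (k2 : ℕ) = (i2 : ℕ) - (h.2 : ℕ) := by omega
          exact congrArg (Sigma.mk α) (Fin.ext hv)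
        rw [hbc]; ring
    · rw [if_neg hc]
      apply Finset.sum_eq_zero; intro k _
      have hbc : bc ⟨α, i2⟩ h k = 0 := by
        rw [bc, if_neg]; rintro ⟨e1, e2, e3⟩
        have e3' : (h.2 : ℕ) + (k.2 : ℕ) = (i2 : ℕ) := e3
        exact hc ⟨e1.symm, by omega⟩
      rw [hbc]; ring
  rw [Finset.sum_congr rfl (fun h _ => hstep h)]
  rw [← Finset.univ_sigma_univ, Finset.sum_sigma]
  rw [Fintype.sum_eq_single α]
  · have hconv : ∀ h2 : Fin (m α),
        (if (⟨α, h2⟩ : (β : Fin r) × Fin (m β)).1 = α ∧ ((⟨α, h2⟩ : (β : Fin r) × Fin (m β)).2 : ℕ) ≤ (i2 : ℕ) then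
            w ⟨α, h2⟩ * blk α g ((i2 : ℕ) - (h2 : ℕ)) else 0)
          = (fun t => if t ≤ (i2 : ℕ) then blk α w t * blk α g ((i2 : ℕ) - t) else 0)
            ((h2 : ℕ)) := by
      intro h2
      by_cases hh : (h2 : ℕ) ≤ (i2 : ℕ)
      · rw [if_pos ⟨rfl, hh⟩]; simp only [if_pos hh]
        congr 1
        rw [blk, dif_pos h2.isLt]
      · rw [if_neg (by tauto)]; simp only [if_neg hh]
    rw [Finset.sum_congr rfl (fun h2 _ => hconv h2)]
    rw [Fin.sum_univ_eq_sum_range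
      (fun t => if t ≤ (i2 : ℕ) then blk α w t * blk α g ((i2 : ℕ) - t) else 0) (m α)]
    rw [← Finset.sum_filter]
    congr 1
    ext t
    simp only [Finset.mem_filter, Finset.mem_range, Nat.lt_succ_iff]
    constructor
    · tauto
    · intro h; exact ⟨lt_of_le_of_lt h i2.isLt, h⟩
  · intro β hβ
    apply Finset.sum_eq_zero; intro h2 _
    rw [if_neg]; rintro ⟨e1, -⟩; exact hβ e1

lemma sumH3 (α : Fin r) (j2 : Fin (m α)) (w g : ((β : Fin r) × Fin (m β)) → ℝ) :
    (∑ h : (β : Fin r) × Fin (m β), ∑ k : (β : Fin r) × Fin (m β),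
        w h * (bc k ⟨α, j2⟩ h * g k))
      = ∑ t ∈ Finset.range (m α - (j2 : ℕ)), blk α w t * blk α g ((j2 : ℕ) + t) := by
  have hstep : ∀ h : (β : Fin r) × Fin (m β),
      (∑ k : (β : Fin r) × Fin (m β), w h * (bc k ⟨α, j2⟩ h * g k))
        = if h.1 = α ∧ (j2 : ℕ) + (h.2 : ℕ) < m α then
            w h * blk α g ((j2 : ℕ) + (h.2 : ℕ)) else 0 := by
    intro h
    by_cases hc : h.1 = α ∧ (j2 : ℕ) + (h.2 : ℕ) < m α
    · rw [if_pos hc]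
      obtain ⟨hc1, hc2⟩ := hc
      rw [Fintype.sum_eq_single (⟨α, ⟨(j2 : ℕ) + (h.2 : ℕ), hc2⟩⟩ :
          (β : Fin r) × Fin (m β))]
      · have hbc : bc ⟨α, ⟨(j2 : ℕ) + (h.2 : ℕ), hc2⟩⟩ ⟨α, j2⟩ h = 1 := by
          rw [bc, if_pos]; exact ⟨rfl, hc1.symm, by simp⟩
        rw [hbc, blk, dif_pos hc2]; ring
      · intro k hk
        have hbc : bc k ⟨α, j2⟩ h = 0 := by
          rw [bc, if_neg]
          rintro ⟨e1, e2, e3⟩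
          apply hk
          rcases k with ⟨γ, k2⟩
          simp only at e1 e2 e3
          have e1' : α = γ := e1.symm
          subst e1'
          have hv : (k2 : ℕ) = (j2 : ℕ) + (h.2 : ℕ) := by omega
          exact congrArg (Sigma.mk α) (Fin.ext hv)
        rw [hbc]; ring
    · rw [if_neg hc]
      apply Finset.sum_eq_zero; intro k _
      have hbc : bc k ⟨α, j2⟩ h = 0 := by
        rw [bc, if_neg]; rintro ⟨e1, e2, e3⟩
        rcases k with ⟨γ, k2⟩
        simp only at e1 e2 e3
        have e1' : α = γ := e1.symm
        subst e1'
        have hk2 := k2.isLt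
        exact hc ⟨e2.symm, by omega⟩
      rw [hbc]; ring
  rw [Finset.sum_congr rfl (fun h _ => hstep h)]
  rw [← Finset.univ_sigma_univ, Finset.sum_sigma]
  rw [Fintype.sum_eq_single α]
  · have hconv : ∀ h2 : Fin (m α),
        (if (⟨α, h2⟩ : (β : Fin r) × Fin (m β)).1 = α ∧ (j2 : ℕ) + ((⟨α, h2⟩ : (β : Fin r) × Fin (m β)).2 : ℕ) < m α then
            w ⟨α, h2⟩ * blk α g ((j2 : ℕ) + (h2 : ℕ)) else 0)
          = (fun t => if (j2 : ℕ) + t < m α then blk α w t * blk α g ((j2 : ℕ) + t) else 0)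
            ((h2 : ℕ)) := by
      intro h2
      by_cases hh : (j2 : ℕ) + (h2 : ℕ) < m α
      · rw [if_pos ⟨rfl, hh⟩]; simp only [if_pos hh]
        congr 1
        rw [blk, dif_pos h2.isLt]
      · rw [if_neg (by tauto)]; simp only [if_neg hh]
    rw [Finset.sum_congr rfl (fun h2 _ => hconv h2)]
    rw [Fin.sum_univ_eq_sum_range
      (fun t => if (j2 : ℕ) + t < m α then blk α w t * blk α g ((j2 : ℕ) + t) else 0) (m α)]
    rw [← Finset.sum_filter]
    congr 1
    ext t
    simp only [Finset.mem_filter, Finset.mem_range]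
    omega
  · intro β hβ
    apply Finset.sum_eq_zero; intro h2 _
    rw [if_neg]; rintro ⟨e1, -⟩; exact hβ e1

end Aux

section Main

variable {r : ℕ} {m : Fin r → ℕ}

noncomputable def Am (μ : (((α : Fin r) × Fin (m α)) → ℝ) → ((α : Fin r) × Fin (m α)) → ℝ)
    (u : ((α : Fin r) × Fin (m α)) → ℝ) (α : Fin r) (t s : ℕ) : ℝ :=
  if h : t < m α ∧ s < m α then pd ⟨α, ⟨s, h.2⟩⟩ (fun v => μ v ⟨α, ⟨t, h.1⟩⟩) u else 0

lemma conv1 (μ : (((α : Fin r) × Fin (m α)) → ℝ) → ((α : Fin r) × Fin (m α)) → ℝ)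
    (u : ((α : Fin r) × Fin (m α)) → ℝ) (α : Fin r) (j2 : Fin (m α)) (n : ℕ) :
    blk α (fun k => pd (⟨α, j2⟩ : (β : Fin r) × Fin (m β)) (fun v => μ v k) u) n
      = Am μ u α n (j2 : ℕ) := by
  by_cases h : n < m α
  · rw [blk, dif_pos h, Am, dif_pos ⟨h, j2.isLt⟩]
  · rw [blk, dif_neg h, Am, dif_neg (by tauto)]

lemma conv2 (μ : (((α : Fin r) × Fin (m α)) → ℝ) → ((α : Fin r) × Fin (m α)) → ℝ)
    (u : ((α : Fin r) × Fin (m α)) → ℝ) (α : Fin r) (i2 : Fin (m α)) (n : ℕ) :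
    blk α (fun k => pd k (fun v => μ v (⟨α, i2⟩ : (β : Fin r) × Fin (m β))) u) n
      = Am μ u α (i2 : ℕ) n := by
  by_cases h : n < m α
  · rw [blk, dif_pos h, Am, dif_pos ⟨i2.isLt, h⟩]
  · rw [blk, dif_neg h, Am, dif_neg (by tauto)]

end Main


/-- a solution of the multi-block generalised Gibbons–Tsarev system with
distinct leading components and `μ^{2(α)} ≠ 0` has `∂_{j(α)} V = 0` for every block `α`
with `m_α ≥ 2` and every `j ∈ {2,…,m_α}` (0-based: `j ≥ 1`). -/
theorem stmt12 {r : ℕ} (m : Fin r → ℕ) (hm : ∀ α, 0 < m α)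
    (hn : 2 ≤ ∑ α, m α)
    (U : Set (((α : Fin r) × Fin (m α)) → ℝ)) (hU : IsOpen U)
    (V : (((α : Fin r) × Fin (m α)) → ℝ) → ℝ)
    (μ : (((α : Fin r) × Fin (m α)) → ℝ) → ((α : Fin r) × Fin (m α)) → ℝ)
    (hV : ContDiffOn ℝ (⊤ : ℕ∞) V U) (hμ : ContDiffOn ℝ (⊤ : ℕ∞) μ U)
    (hdist : ∀ u ∈ U, ∀ α β : Fin r, α ≠ β →
      μ u ⟨α, ⟨0, hm α⟩⟩ ≠ μ u ⟨β, ⟨0, hm β⟩⟩)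
    (h2 : ∀ α : Fin r, ∀ h : 2 ≤ m α, ∀ u ∈ U, μ u ⟨α, ⟨1, h⟩⟩ ≠ 0)
    (hEQ1 : ∀ i j : (α : Fin r) × Fin (m α), ∀ u ∈ U, GT1b μ V i j u = 0)
    (hEQ2 : ∀ i j : (α : Fin r) × Fin (m α), ∀ u ∈ U, GT2b μ V i j u = 0) :
    ∀ α : Fin r, 2 ≤ m α → ∀ j : Fin (m α), 1 ≤ (j : ℕ) →
      ∀ u ∈ U, pd (⟨α, j⟩ : (α : Fin r) × Fin (m α)) V u = 0 := by
  intro α hα2 j hj u hu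
  have key : ∀ i2 j2 : ℕ, ∀ hi2 : i2 < m α, ∀ hj2 : j2 < m α, i2 < j2 →
      (∑ t ∈ Finset.range (i2 + 1),
          blk α (μ u) t * Am μ u α (i2 - t) j2)
        - (∑ t ∈ Finset.range (m α - j2),
            blk α (μ u) t * Am μ u α i2 (j2 + t))
        + (if i2 = 0 then (1 : ℝ) else 0) *
            pd (⟨α, ⟨j2, hj2⟩⟩ : (β : Fin r) × Fin (m β)) V u = 0 := by
    intro i2 j2 hi2 hj2 hlt
    have h0 := hEQ2 ⟨α, ⟨i2, hi2⟩⟩ ⟨α, ⟨j2, hj2⟩⟩ u hu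
    rw [GT2b] at h0
    have hbc0 : ∀ s, bc (⟨α, ⟨i2, hi2⟩⟩ : (β : Fin r) × Fin (m β)) ⟨α, ⟨j2, hj2⟩⟩ s = 0 :=
      fun s => bc_zero_of_lt _ _ _ hlt
    have hne : (⟨α, ⟨i2, hi2⟩⟩ : (β : Fin r) × Fin (m β)) ≠ ⟨α, ⟨j2, hj2⟩⟩ := by
      intro hh
      have := congrArg (fun x : (β : Fin r) × Fin (m β) => (x.2 : ℕ)) hh
      simp only at this
      omega
    simp only [hbc0, zero_mul, mul_zero, add_zero, Finset.sum_const_zero, sub_zero,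
      if_neg hne] at h0
    simp only [mul_sub, Finset.sum_sub_distrib] at h0
    rw [sumH1 α ⟨i2, hi2⟩ (μ u)
          (fun k => pd (⟨α, ⟨j2, hj2⟩⟩ : (β : Fin r) × Fin (m β)) (fun v => μ v k) u),
        sumH3 α ⟨j2, hj2⟩ (μ u)
          (fun k => pd k (fun v => μ v (⟨α, ⟨i2, hi2⟩⟩ : (β : Fin r) × Fin (m β))) u)]
      at h0
    simp only [conv1, conv2] at h0
    exact h0
  have hφ1 : blk α (μ u) 1 ≠ 0 := by
    rw [blk, dif_pos (by omega : (1 : ℕ) < m α)]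
    exact h2 α hα2 u hu
  have claim : ∀ d s t, m α ≤ s + d → t + 2 ≤ s → s < m α → Am μ u α t s = 0 := by
    intro d
    induction d with
    | zero => intro s t h1 _ h3; omega
    | succ d ih =>
      intro s t h1 ht2 h3
      have inner : ∀ t', t' + 2 ≤ s → Am μ u α t' s = 0 := by
        intro t'
        induction t' using Nat.strong_induction_on with
        | _ t iht =>
          intro ht2'
          have hi1 : t + 1 < m α := by omega
          have h0 := key (t + 1) s hi1 h3 (by omega)
          rw [if_neg (Nat.succ_ne_zero t), zero_mul, add_zero] at h0
          rw [Finset.sum_range_succ', Finset.sum_range_succ'] at h0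
          rw [show m α - s = (m α - s - 1) + 1 from by omega,
              Finset.sum_range_succ'] at h0
          have hz1 : ∑ x ∈ Finset.range t,
              blk α (μ u) (x + 1 + 1) * Am μ u α ((t + 1) - (x + 1 + 1)) s = 0 := by
            apply Finset.sum_eq_zero; intro x hx
            have hxlt : x < t := Finset.mem_range.mp hx
            have he : (t + 1) - (x + 1 + 1) = t - (x + 1) := by omega
            rw [he, iht (t - (x + 1)) (by omega) (by omega), mul_zero]
          have hz2 : ∑ x ∈ Finset.range (m α - s - 1),
              blk α (μ u) (x + 1) * Am μ u α (t + 1) (s + (x + 1)) = 0 := by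
            apply Finset.sum_eq_zero; intro x hx
            have hxlt : x < m α - s - 1 := Finset.mem_range.mp hx
            rw [ih (s + (x + 1)) (t + 1) (by omega) (by omega) (by omega), mul_zero]
          rw [hz1, hz2, zero_add, zero_add] at h0
          simp only [zero_add, Nat.add_sub_cancel, Nat.sub_zero, Nat.add_zero] at h0
          have hmul : blk α (μ u) 1 * Am μ u α t s = 0 := by linarith
          exact (mul_eq_zero.mp hmul).resolve_left hφ1
      exact inner t ht2
  have hjlt := j.isLt
  have h0 := key 0 (j : ℕ) (by omega) hjlt (by omega)
  rw [if_pos rfl, one_mul] at h0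
  rw [Finset.sum_range_one] at h0
  rw [show m α - (j : ℕ) = (m α - (j : ℕ) - 1) + 1 from by omega,
      Finset.sum_range_succ'] at h0
  have hz2 : ∑ x ∈ Finset.range (m α - (j : ℕ) - 1),
      blk α (μ u) (x + 1) * Am μ u α 0 ((j : ℕ) + (x + 1)) = 0 := by
    apply Finset.sum_eq_zero; intro x hx
    have hxlt : x < m α - (j : ℕ) - 1 := Finset.mem_range.mp hx
    rw [claim (m α) ((j : ℕ) + (x + 1)) 0 (by omega) (by omega) (by omega), mul_zero]
  rw [hz2, zero_add] at h0
  simp only [Nat.sub_zero, Nat.add_zero, Fin.eta] at h0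
  linarith
end
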